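/- arXiv:1902.01361 — 3 statements merged into one kernel-verified Lean document; each statement's English description precedes it below -/
import Mathlib

section
/- Let A = a_n∂^n + a_{n-1}∂^{n-1} + ⋯ + a_0 and B = b_m∂^m + b_{m-1}∂^{m-1} + ⋯ + b_0 be operators in 𝒟 with a_n ≠ 0, b_m ≠ 0 and n > 0. If ord([A,B]) < n + m − 1, then there exists a constant α ∈ ℂ such that b_m^n = α·a_n^m. If moreover a_n and b_m are constants and ord([A,B]) < n + m − 2, then there exist constants α, β ∈ ℂ such that b_{m−1} = α·a_{n−1} + β. -/
open scoped BigOperators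

/-- The operator of left multiplication by `a ∈ K`, viewed in `Module.End ℂ K`. -/
noncomputable def mulOp (K : Type*) [CommRing K] [Algebra ℂ K] (a : K) :
    Module.End ℂ K := LinearMap.mulLeft ℂ a

/-- The differential operator `Σ_{i=0}^{n} a_i ∂^i` (with `∂ = δ`). -/
noncomputable def diffOp {K : Type*} [CommRing K] [Algebra ℂ K] (δ : Module.End ℂ K)
    (a : ℕ → K) (n : ℕ) : Module.End ℂ K :=
  ∑ i ∈ Finset.range (n + 1), mulOp K (a i) * δ ^ i

/-- `OrdLT δ P t` : the operator `P` can be written as `Σ_{i<t} c_i δ^i`,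
i.e. `ord(P) < t` (this includes `P = 0`, of order `-∞`). -/
def OrdLT {K : Type*} [CommRing K] [Algebra ℂ K] (δ : Module.End ℂ K)
    (P : Module.End ℂ K) (t : ℕ) : Prop :=
  ∃ c : ℕ → K, P = ∑ i ∈ Finset.range t, mulOp K (c i) * δ ^ i

section Basic
variable {K : Type*} [Field K] [Algebra ℂ K] (δ : Module.End ℂ K)

lemma mulOp_apply (x y : K) : mulOp K x y = x * y := rfl

lemma mulOp_zero : mulOp K (0:K) = 0 := by
  ext y; simp [mulOp_apply]

lemma mulOp_add (x y : K) : mulOp K (x + y) = mulOp K x + mulOp K y := by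
  ext z; simp [mulOp_apply, add_mul]

lemma mulOp_neg (x : K) : mulOp K (-x) = - mulOp K x := by
  ext z; simp [mulOp_apply]

lemma mulOp_sub (x y : K) : mulOp K (x - y) = mulOp K x - mulOp K y := by
  ext z; simp [mulOp_apply, sub_mul]

lemma mulOp_mul (x y : K) : mulOp K (x * y) = mulOp K x * mulOp K y := by
  ext z; simp [mulOp_apply, Module.End.mul_apply, mul_assoc]

lemma ordLT_zero (t : ℕ) : OrdLT δ 0 t := by
  refine ⟨fun _ => 0, ?_⟩
  simp [mulOp_zero]

lemma ordLT_add {P Q : Module.End ℂ K} {t : ℕ} (hP : OrdLT δ P t) (hQ : OrdLT δ Q t) :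
    OrdLT δ (P + Q) t := by
  obtain ⟨c, hc⟩ := hP; obtain ⟨d, hd⟩ := hQ
  refine ⟨fun i => c i + d i, ?_⟩
  simp [hc, hd, mulOp_add, add_mul, Finset.sum_add_distrib]

lemma ordLT_neg {P : Module.End ℂ K} {t : ℕ} (hP : OrdLT δ P t) : OrdLT δ (-P) t := by
  obtain ⟨c, hc⟩ := hP
  refine ⟨fun i => -(c i), ?_⟩
  rw [hc, ← Finset.sum_neg_distrib]
  apply Finset.sum_congr rfl; intro i _
  simp only [mulOp_neg]; ext z; rfl

lemma ordLT_sub {P Q : Module.End ℂ K} {t : ℕ} (hP : OrdLT δ P t) (hQ : OrdLT δ Q t) :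
    OrdLT δ (P - Q) t := by
  rw [sub_eq_add_neg]; exact ordLT_add δ hP (ordLT_neg δ hQ)

lemma ordLT_mono {P : Module.End ℂ K} {t t' : ℕ} (h : t ≤ t') (hP : OrdLT δ P t) :
    OrdLT δ P t' := by
  obtain ⟨c, hc⟩ := hP
  refine ⟨fun i => if i < t then c i else 0, ?_⟩
  rw [hc, ← Finset.sum_range_add_sum_Ico _ h]
  have h1 : ∑ i ∈ Finset.range t, mulOp K (c i) * δ ^ i
      = ∑ i ∈ Finset.range t, mulOp K (if i < t then c i else 0) * δ ^ i := by
    apply Finset.sum_congr rfl; intro i hi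
    simp [Finset.mem_range.mp hi]
  have h2 : ∑ i ∈ Finset.Ico t t', mulOp K (if i < t then c i else 0) * δ ^ i = 0 := by
    apply Finset.sum_eq_zero; intro i hi
    have := (Finset.mem_Ico.mp hi).1
    simp [Nat.not_lt.mpr this, mulOp_zero]
  rw [h1]
  simp [h2]

lemma ordLT_mulOp_left {P : Module.End ℂ K} {t : ℕ} (x : K) (hP : OrdLT δ P t) :
    OrdLT δ (mulOp K x * P) t := by
  obtain ⟨c, hc⟩ := hP
  refine ⟨fun i => x * c i, ?_⟩
  simp [hc, Finset.mul_sum, mulOp_mul, mul_assoc]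

lemma ordLT_single (e : K) (k : ℕ) : OrdLT δ (mulOp K e * δ ^ k) (k + 1) := by
  refine ⟨fun i => if i = k then e else 0, ?_⟩
  rw [Finset.sum_eq_single k]
  · simp
  · intro i _ hik; simp [hik, mulOp_zero]
  · intro h; exact absurd (Finset.self_mem_range_succ k) h

lemma ordLT_mul_pow {P : Module.End ℂ K} {t : ℕ} (j : ℕ) (hP : OrdLT δ P t) :
    OrdLT δ (P * δ ^ j) (t + j) := by
  obtain ⟨c, hc⟩ := hP
  refine ⟨fun i => if j ≤ i then c (i - j) else 0, ?_⟩
  rw [hc, Finset.sum_mul]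
  rw [Finset.sum_congr rfl (fun i hi => by rw [mul_assoc, ← pow_add])]
  rw [← Finset.sum_range_add_sum_Ico _ (Nat.le_add_left j t)]
  have h2 : ∑ i ∈ Finset.range j, mulOp K (if j ≤ i then c (i - j) else 0) * δ ^ i = 0 := by
    apply Finset.sum_eq_zero; intro i hi
    have := Finset.mem_range.mp hi
    simp [Nat.not_le.mpr this, mulOp_zero]
  have h3 : ∑ i ∈ Finset.Ico j (t + j), mulOp K (if j ≤ i then c (i - j) else 0) * δ ^ i
      = ∑ i ∈ Finset.range t, mulOp K (c i) * δ ^ (i + j) := by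
    rw [Finset.sum_Ico_eq_sum_range]
    apply Finset.sum_congr (by congr 1; omega)
    intro i _
    have h4 : j ≤ j + i := Nat.le_add_right j i
    simp only [h4, if_true, Nat.add_sub_cancel_left]
    rw [Nat.add_comm j i]
  rw [← h3]
  simp [h2]

lemma ordLT_eq_zero {P : Module.End ℂ K} (hP : OrdLT δ P 0) : P = 0 := by
  obtain ⟨c, hc⟩ := hP; simpa using hc

lemma ordLT_sum {ι : Type*} (s : Finset ι) (f : ι → Module.End ℂ K) (t : ℕ)
    (h : ∀ p ∈ s, OrdLT δ (f p) t) : OrdLT δ (∑ p ∈ s, f p) t := by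
  classical
  induction s using Finset.induction_on with
  | empty => simpa using ordLT_zero δ t
  | insert _ _ hx ih =>
    rw [Finset.sum_insert hx]
    exact ordLT_add δ (h _ (Finset.mem_insert_self _ _))
      (ih (fun p hp => h p (Finset.mem_insert_of_mem hp)))

end Basic

section Deriv
variable {K : Type*} [Field K] [Algebra ℂ K] (δ : Module.End ℂ K)
  (hL : ∀ a b : K, δ (a * b) = a * δ b + δ a * b)
include hL

lemma d_one : δ 1 = 0 := by
  have := hL 1 1
  simpa using this

lemma d_algebraMap (c : ℂ) : δ (algebraMap ℂ K c) = 0 := by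
  have : algebraMap ℂ K c = c • (1:K) := Algebra.algebraMap_eq_smul_one c
  rw [this, map_smul, d_one δ hL, smul_zero]

lemma d_natCast (k : ℕ) : δ (k : K) = 0 := by
  have : ((k:ℕ):K) = algebraMap ℂ K (k : ℂ) := by
    rw [map_natCast]
  rw [this]; exact d_algebraMap δ hL _

lemma d_constMul {q : K} (hq : δ q = 0) (u : K) : δ (q * u) = q * δ u := by
  rw [hL, hq, zero_mul, add_zero]

lemma d_pow (u : K) (k : ℕ) : δ (u ^ k) = (k : K) * u ^ (k - 1) * δ u := by
  induction k with
  | zero => simp [d_one δ hL]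
  | succ k ih =>
    rw [pow_succ, hL, ih]
    cases k with
    | zero => simp
    | succ k =>
      rw [Nat.succ_sub_one, Nat.succ_sub_one]
      push_cast
      linear_combination ((k:K) + 1) * δ u * (pow_succ u k)

lemma d_inv {v : K} (hv : v ≠ 0) : δ v⁻¹ = -(δ v) * (v⁻¹ * v⁻¹) := by
  have h2 : v * δ v⁻¹ + δ v * v⁻¹ = 0 := by
    have h := hL v v⁻¹
    rw [mul_inv_cancel₀ hv, d_one δ hL] at h
    linear_combination -h
  have h3 : δ v⁻¹ = v⁻¹ * (v * δ v⁻¹) := by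
    rw [← mul_assoc, inv_mul_cancel₀ hv, one_mul]
  have h4 : v * δ v⁻¹ = -(δ v * v⁻¹) := by linear_combination h2
  rw [h3, h4]; ring

lemma delta_mulOp (x : K) : δ * mulOp K x = mulOp K x * δ + mulOp K (δ x) := by
  ext y
  simp only [Module.End.mul_apply, LinearMap.add_apply, mulOp_apply]
  rw [hL]

end Deriv

section Push
variable {K : Type*} [Field K] [Algebra ℂ K] (δ : Module.End ℂ K)
  (hL : ∀ a b : K, δ (a * b) = a * δ b + δ a * b)
include hL

lemma ordLT_delta_left {P : Module.End ℂ K} {t : ℕ} (hP : OrdLT δ P t) :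
    OrdLT δ (δ * P) (t + 1) := by
  obtain ⟨c, hc⟩ := hP
  have key : δ * P = (∑ i ∈ Finset.range t, mulOp K (c i) * δ ^ (i+1))
      + ∑ i ∈ Finset.range t, mulOp K (δ (c i)) * δ ^ i := by
    rw [hc, Finset.mul_sum, ← Finset.sum_add_distrib]
    apply Finset.sum_congr rfl
    intro i _
    rw [← mul_assoc, delta_mulOp δ hL, add_mul, mul_assoc, ← pow_succ']
  rw [key]
  apply ordLT_add δ
  · have h1 : (∑ i ∈ Finset.range t, mulOp K (c i) * δ ^ (i+1))
        = (∑ i ∈ Finset.range t, mulOp K (c i) * δ ^ i) * δ ^ 1 := by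
      rw [Finset.sum_mul]
      apply Finset.sum_congr rfl
      intro i _
      rw [mul_assoc, ← pow_add]
    rw [h1, ← hc]
    exact ordLT_mul_pow δ 1 ⟨c, hc⟩
  · exact ordLT_mono δ (Nat.le_succ t) ⟨fun i => δ (c i), rfl⟩

lemma push2 (i : ℕ) (x : K) : ∃ R, OrdLT δ R i ∧
    δ ^ (i+1) * mulOp K x
      = mulOp K x * δ ^ (i+1) + mulOp K (((i:K)+1) * δ x) * δ ^ i + R := by
  induction i with
  | zero =>
    refine ⟨0, ordLT_zero δ 0, ?_⟩
    simp only [pow_one, pow_zero, mul_one, add_zero, Nat.cast_zero, zero_add, one_mul]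
    exact delta_mulOp δ hL x
  | succ i ih =>
    obtain ⟨R, hR, hEq⟩ := ih
    refine ⟨mulOp K (((i:K)+1) * δ (δ x)) * δ ^ i + δ * R,
      ordLT_add δ (ordLT_single δ _ i) (ordLT_delta_left δ hL hR), ?_⟩
    have e1 : δ ^ (i+1+1) * mulOp K x = δ * (δ ^ (i+1) * mulOp K x) := by
      rw [← mul_assoc, ← pow_succ']
    have e2 : δ (((i:K)+1) * δ x) = ((i:K)+1) * δ (δ x) := by
      apply d_constMul δ hL
      have h : ((i:K)+1) = ((i+1 : ℕ) : K) := by push_cast; ring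
      rw [h]; exact d_natCast δ hL _
    have c1 : (mulOp K x * δ + mulOp K (δ x)) * δ^(i+1)
        = mulOp K x * δ^(i+1+1) + mulOp K (δ x) * δ^(i+1) := by
      rw [add_mul, mul_assoc, ← pow_succ']
    have c2 : (mulOp K (((i:K)+1) * δ x) * δ + mulOp K (((i:K)+1) * δ (δ x))) * δ^i
        = mulOp K (((i:K)+1) * δ x) * δ^(i+1) + mulOp K (((i:K)+1) * δ (δ x)) * δ^i := by
      rw [add_mul, mul_assoc, ← pow_succ']
    have c3 : ((((i+1:ℕ)):K)+1) * δ x = δ x + ((i:K)+1) * δ x := by push_cast; ring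
    rw [e1, hEq, mul_add, mul_add, ← mul_assoc, ← mul_assoc,
      delta_mulOp δ hL x, delta_mulOp δ hL (((i:K)+1) * δ x), e2, c1, c2,
      c3, mulOp_add]
    simp only [add_mul]
    abel

end Push

section Br
variable {K : Type*} [Field K] [Algebra ℂ K] (δ : Module.End ℂ K)
  (hL : ∀ a b : K, δ (a * b) = a * δ b + δ a * b)
include hL

lemma pushAll (i : ℕ) (x : K) : ∃ R, OrdLT δ R (i - 1) ∧
    δ ^ i * mulOp K x
      = mulOp K x * δ ^ i + mulOp K ((i:K) * δ x) * δ ^ (i - 1) + R := by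
  cases i with
  | zero =>
    refine ⟨0, ordLT_zero δ 0, ?_⟩
    simp [mulOp_zero]
  | succ i =>
    obtain ⟨R, hR, hEq⟩ := push2 δ hL i x
    refine ⟨R, by simpa using hR, ?_⟩
    simpa [Nat.succ_sub_one] using hEq

lemma brFull (i j : ℕ) (c d : K) : ∃ R, OrdLT δ R (i + j - 1) ∧
    (mulOp K c * δ ^ i) * (mulOp K d * δ ^ j) - (mulOp K d * δ ^ j) * (mulOp K c * δ ^ i)
      = mulOp K ((i:K) * c * δ d - (j:K) * d * δ c) * δ ^ (i + j - 1) + R := by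
  obtain ⟨R₁, hR₁, hEq₁⟩ := pushAll δ hL i d
  obtain ⟨R₂, hR₂, hEq₂⟩ := pushAll δ hL j c
  have expand : (mulOp K c * δ ^ i) * (mulOp K d * δ ^ j)
        - (mulOp K d * δ ^ j) * (mulOp K c * δ ^ i)
      = mulOp K c * mulOp K ((i:K) * δ d) * (δ ^ (i-1) * δ ^ j)
        - mulOp K d * mulOp K ((j:K) * δ c) * (δ ^ (j-1) * δ ^ i)
        + (mulOp K c * R₁ * δ ^ j - mulOp K d * R₂ * δ ^ i) := by
    have l1 : (mulOp K c * δ ^ i) * (mulOp K d * δ ^ j)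
        = mulOp K c * mulOp K d * (δ^i * δ^j)
          + mulOp K c * mulOp K ((i:K) * δ d) * (δ ^ (i-1) * δ ^ j)
          + mulOp K c * R₁ * δ ^ j := by
      calc (mulOp K c * δ ^ i) * (mulOp K d * δ ^ j)
          = mulOp K c * (δ ^ i * mulOp K d) * δ ^ j := by noncomm_ring
        _ = _ := by rw [hEq₁]; noncomm_ring
    have l2 : (mulOp K d * δ ^ j) * (mulOp K c * δ ^ i)
        = mulOp K d * mulOp K c * (δ^j * δ^i)
          + mulOp K d * mulOp K ((j:K) * δ c) * (δ ^ (j-1) * δ ^ i)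
          + mulOp K d * R₂ * δ ^ i := by
      calc (mulOp K d * δ ^ j) * (mulOp K c * δ ^ i)
          = mulOp K d * (δ ^ j * mulOp K c) * δ ^ i := by noncomm_ring
        _ = _ := by rw [hEq₂]; noncomm_ring
    have comm1 : mulOp K c * mulOp K d = mulOp K d * mulOp K c := by
      rw [← mulOp_mul, ← mulOp_mul, mul_comm]
    have comm2 : δ^i * δ^j = δ^j * δ^i := by
      rw [← pow_add, ← pow_add, Nat.add_comm]
    rw [l1, l2, comm1, comm2]
    abel
  have term1 : mulOp K c * mulOp K ((i:K) * δ d) * (δ ^ (i-1) * δ ^ j)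
      = mulOp K ((i:K) * c * δ d) * δ ^ (i + j - 1) := by
    cases i with
    | zero => simp [mulOp_zero]
    | succ i =>
      rw [← mulOp_mul, ← pow_add]
      have h1 : (i+1) - 1 + j = (i+1) + j - 1 := by omega
      have h2 : c * (((i+1:ℕ):K) * δ d) = ((i+1:ℕ):K) * c * δ d := by ring
      rw [h1, h2]
  have term2 : mulOp K d * mulOp K ((j:K) * δ c) * (δ ^ (j-1) * δ ^ i)
      = mulOp K ((j:K) * d * δ c) * δ ^ (i + j - 1) := by
    cases j with
    | zero => simp [mulOp_zero]
    | succ j =>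
      rw [← mulOp_mul, ← pow_add]
      have h1 : (j+1) - 1 + i = i + (j+1) - 1 := by omega
      have h2 : d * (((j+1:ℕ):K) * δ c) = ((j+1:ℕ):K) * d * δ c := by ring
      rw [h1, h2]
  have hp1 : OrdLT δ (mulOp K c * R₁ * δ ^ j) (i + j - 1) := by
    cases i with
    | zero =>
      rw [ordLT_eq_zero δ hR₁]
      simpa using ordLT_zero δ _
    | succ i =>
      have := ordLT_mul_pow δ j (ordLT_mulOp_left δ c hR₁)
      exact ordLT_mono δ (by omega) this
  have hp2 : OrdLT δ (mulOp K d * R₂ * δ ^ i) (i + j - 1) := by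
    cases j with
    | zero =>
      rw [ordLT_eq_zero δ hR₂]
      simpa using ordLT_zero δ _
    | succ j =>
      have := ordLT_mul_pow δ i (ordLT_mulOp_left δ d hR₂)
      exact ordLT_mono δ (by omega) this
  refine ⟨mulOp K c * R₁ * δ ^ j - mulOp K d * R₂ * δ ^ i, ordLT_sub δ hp1 hp2, ?_⟩
  rw [expand, term1, term2, mulOp_sub, sub_mul]

lemma brOrd (i j : ℕ) (c d : K) :
    OrdLT δ ((mulOp K c * δ ^ i) * (mulOp K d * δ ^ j)
      - (mulOp K d * δ ^ j) * (mulOp K c * δ ^ i)) (i + j) := by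
  rcases Nat.eq_zero_or_pos (i + j) with h | h
  · obtain ⟨hi, hj⟩ := Nat.add_eq_zero.mp h
    subst hi; subst hj
    have : (mulOp K c * δ ^ 0) * (mulOp K d * δ ^ 0)
        - (mulOp K d * δ ^ 0) * (mulOp K c * δ ^ 0) = 0 := by
      simp only [pow_zero, mul_one, ← mulOp_mul]
      rw [mul_comm]; exact sub_self _
    rw [this]; exact ordLT_zero δ _
  · obtain ⟨R, hR, hEq⟩ := brFull δ hL i j c d
    rw [hEq]
    apply ordLT_add δ
    · exact ordLT_mono δ (by omega) (ordLT_single δ _ _)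
    · exact ordLT_mono δ (by omega) hR

end Br

section Indep
variable {K : Type*} [Field K] [Algebra ℂ K] (δ : Module.End ℂ K)
  (hL : ∀ a b : K, δ (a * b) = a * δ b + δ a * b) {x : K} (hx : δ x ≠ 0)
include hL hx

lemma indep : ∀ t : ℕ, ∀ c : ℕ → K,
    (∑ i ∈ Finset.range t, mulOp K (c i) * δ ^ i = 0) → ∀ i < t, c i = 0 := by
  haveI : CharZero K := charZero_of_injective_algebraMap (algebraMap ℂ K).injective
  intro t
  induction t using Nat.strong_induction_on with
  | _ t IH =>
    match t with
    | 0 => intro c _ i hi; omega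
    | 1 =>
      intro c hS i hi
      interval_cases i
      have h1 : mulOp K (c 0) = 0 := by simpa using hS
      have := congrArg (fun (P : Module.End ℂ K) => P 1) h1
      simpa [mulOp_apply] using this
    | (s+2) =>
      intro c hS
      set T : ℕ → Module.End ℂ K :=
        fun i => mulOp K (c i) * (δ ^ i * mulOp K x - mulOp K x * δ ^ i) with hT
      have hQ : ∑ i ∈ Finset.range (s+2), T i = 0 := by
        have hpt : ∀ i, T i = (mulOp K (c i) * δ ^ i) * mulOp K x
            - mulOp K x * (mulOp K (c i) * δ ^ i) := by
          intro i
          have hcomm : mulOp K (c i) * mulOp K x = mulOp K x * mulOp K (c i) := by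
            rw [← mulOp_mul, ← mulOp_mul, mul_comm]
          calc T i = mulOp K (c i) * δ ^ i * mulOp K x
              - mulOp K (c i) * mulOp K x * δ ^ i := by rw [hT]; simp only [mul_sub, mul_assoc]
            _ = _ := by rw [hcomm, mul_assoc (mulOp K x) (mulOp K (c i)) (δ ^ i)]
        rw [Finset.sum_congr rfl (fun i _ => hpt i), Finset.sum_sub_distrib,
          ← Finset.sum_mul, ← Finset.mul_sum, hS, zero_mul, mul_zero, sub_zero]
      obtain ⟨R, hR, hEq⟩ := push2 δ hL s x
      have hTtop : T (s+1) = mulOp K (c (s+1) * (((s:K)+1) * δ x)) * δ ^ s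
          + mulOp K (c (s+1)) * R := by
        have hdiff : δ ^ (s+1) * mulOp K x - mulOp K x * δ ^ (s+1)
            = mulOp K (((s:K)+1) * δ x) * δ ^ s + R := by rw [hEq]; abel
        rw [hT]; dsimp only
        rw [hdiff, mul_add, ← mul_assoc, ← mulOp_mul]
      have hLow : OrdLT δ (∑ i ∈ Finset.range (s+1), T i) s := by
        apply ordLT_sum
        intro i hi
        have hi' : i < s + 1 := Finset.mem_range.mp hi
        match i with
        | 0 =>
          have : T 0 = 0 := by rw [hT]; simp
          rw [this]; exact ordLT_zero δ s
        | (k+1) =>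
          obtain ⟨R', hR', hEq'⟩ := push2 δ hL k x
          have hdiff : δ ^ (k+1) * mulOp K x - mulOp K x * δ ^ (k+1)
              = mulOp K (((k:K)+1) * δ x) * δ ^ k + R' := by rw [hEq']; abel
          rw [hT]; dsimp only
          rw [hdiff]
          apply ordLT_mono δ (show k+1 ≤ s by omega)
          apply ordLT_mulOp_left
          exact ordLT_add δ (ordLT_single δ _ k) (ordLT_mono δ (Nat.le_succ k) hR')
      have h0 : ∑ i ∈ Finset.range (s+1), T i + T (s+1) = 0 := by
        rw [← Finset.sum_range_succ]; exact hQ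
      rw [hTtop] at h0
      have h1 : mulOp K (c (s+1) * (((s:K)+1) * δ x)) * δ ^ s
          = - (mulOp K (c (s+1)) * R) - ∑ i ∈ Finset.range (s+1), T i := by
        linear_combination (norm := abel) h0
      have h2 : OrdLT δ (mulOp K (c (s+1) * (((s:K)+1) * δ x)) * δ ^ s) s := by
        rw [h1]
        exact ordLT_sub δ (ordLT_neg δ (ordLT_mulOp_left δ _ hR)) hLow
      obtain ⟨d, hd⟩ := h2
      set e := c (s+1) * (((s:K)+1) * δ x) with he
      set f : ℕ → K := fun i => if i = s then e else -(d i) with hf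
      have hfsum : ∑ i ∈ Finset.range (s+1), mulOp K (f i) * δ ^ i = 0 := by
        rw [Finset.sum_range_succ]
        have hc1 : ∀ i ∈ Finset.range s, mulOp K (f i) * δ ^ i
            = mulOp K (-(d i)) * δ ^ i := by
          intro i hi
          have : i ≠ s := by have := Finset.mem_range.mp hi; omega
          simp [hf, this]
        rw [Finset.sum_congr rfl hc1]
        have hfs : f s = e := by simp [hf]
        rw [hfs]
        have : ∑ i ∈ Finset.range s, mulOp K (-(d i)) * δ ^ i
            = - ∑ i ∈ Finset.range s, mulOp K (d i) * δ ^ i := by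
          rw [← Finset.sum_neg_distrib]
          apply Finset.sum_congr rfl; intro i _
          rw [mulOp_neg]; ext z; rfl
        rw [this, ← hd]
        abel
      have hes : e = 0 := by
        have := IH (s+1) (by omega) f hfsum s (by omega)
        simpa [hf] using this
      have hctop : c (s+1) = 0 := by
        rcases mul_eq_zero.mp hes with h | h
        · exact h
        · exfalso
          rcases mul_eq_zero.mp h with h' | h'
          · have : ((s:K)+1) ≠ 0 := by
              have : (((s+1:ℕ)):K) ≠ 0 := Nat.cast_ne_zero.mpr (by omega)
              push_cast at this; exact this
            exact this h'
          · exact hx h'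
      have hS' : ∑ i ∈ Finset.range (s+1), mulOp K (c i) * δ ^ i = 0 := by
        rw [Finset.sum_range_succ, hctop, mulOp_zero, zero_mul, add_zero] at hS
        exact hS
      have hrest := IH (s+1) (by omega) c hS'
      intro i hi
      rcases Nat.lt_or_ge i (s+1) with h | h
      · exact hrest i h
      · have : i = s+1 := by omega
        rw [this]; exact hctop

lemma topCoeff {e : K} {t : ℕ} (h : OrdLT δ (mulOp K e * δ ^ t) t) : e = 0 := by
  obtain ⟨d, hd⟩ := h
  set f : ℕ → K := fun i => if i = t then e else -(d i) with hf
  have hfsum : ∑ i ∈ Finset.range (t+1), mulOp K (f i) * δ ^ i = 0 := by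
    rw [Finset.sum_range_succ]
    have hc1 : ∀ i ∈ Finset.range t, mulOp K (f i) * δ ^ i
        = mulOp K (-(d i)) * δ ^ i := by
      intro i hi
      have : i ≠ t := by have := Finset.mem_range.mp hi; omega
      simp [hf, this]
    rw [Finset.sum_congr rfl hc1]
    have hfs : f t = e := by simp [hf]
    rw [hfs]
    have : ∑ i ∈ Finset.range t, mulOp K (-(d i)) * δ ^ i
        = - ∑ i ∈ Finset.range t, mulOp K (d i) * δ ^ i := by
      rw [← Finset.sum_neg_distrib]
      apply Finset.sum_congr rfl; intro i _
      rw [mulOp_neg]; ext z; rfl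
    rw [this, ← hd]
    abel
  have := indep δ hL hx (t+1) f hfsum t (by omega)
  simpa [hf] using this

end Indep

/-- If `A = Σ_{i≤n} a_i ∂^i` (`a_n ≠ 0`, `n > 0`) and `B = Σ_{i≤m} b_i ∂^i`
(`b_m ≠ 0`) are differential operators over a differential field `(K, δ)` of characteristic
zero with field of constants `ℂ`, and `ord([A,B]) < n + m - 1`, then `b_m^n = α a_n^m`
for some constant `α ∈ ℂ`; if moreover `a_n`, `b_m` are constants and
`ord([A,B]) < n + m - 2`, then `b_{m-1} = α a_{n-1} + β` for some constants `α, β ∈ ℂ`. -/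
theorem statement0 {K : Type*} [Field K] [Algebra ℂ K]
    (δ : Module.End ℂ K)
    (hLeibniz : ∀ a b : K, δ (a * b) = a * δ b + δ a * b)
    (hconst : ∀ a : K, δ a = 0 ↔ ∃ c : ℂ, a = algebraMap ℂ K c)
    (n m : ℕ) (hn : 0 < n)
    (a b : ℕ → K) (han : a n ≠ 0) (hbm : b m ≠ 0)
    (A B : Module.End ℂ K) (hA : A = diffOp δ a n) (hB : B = diffOp δ b m)
    (hord : OrdLT δ (A * B - B * A) (n + m - 1)) :
    (∃ α : ℂ, b m ^ n = algebraMap ℂ K α * a n ^ m) ∧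
      (δ (a n) = 0 → δ (b m) = 0 → OrdLT δ (A * B - B * A) (n + m - 2) →
        ∃ α β : ℂ, b (m - 1) = algebraMap ℂ K α * a (n - 1) + algebraMap ℂ K β) := by
  haveI : CharZero K := charZero_of_injective_algebraMap (algebraMap ℂ K).injective
  have hL := hLeibniz
  subst hA; subst hB
  by_cases hδ0 : ∀ u : K, δ u = 0
  · constructor
    · obtain ⟨γb, hγb⟩ := (hconst (b m)).mp (hδ0 _)
      obtain ⟨γa, hγa⟩ := (hconst (a n)).mp (hδ0 _)
      have hγa0 : γa ≠ 0 := by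
        rintro rfl; rw [map_zero] at hγa; exact han hγa
      refine ⟨γb ^ n / γa ^ m, ?_⟩
      rw [hγb, hγa, ← map_pow, ← map_pow, ← map_mul]
      congr 1
      field_simp
    · intro _ _ _
      obtain ⟨γ, hγ⟩ := (hconst (b (m-1))).mp (hδ0 _)
      exact ⟨0, γ, by rw [hγ]; simp⟩
  · push_neg at hδ0
    obtain ⟨x, hx⟩ := hδ0
    set s : Finset (ℕ × ℕ) := Finset.range (n+1) ×ˢ Finset.range (m+1) with hs
    set F : ℕ × ℕ → Module.End ℂ K := fun p =>
      (mulOp K (a p.1) * δ ^ p.1) * (mulOp K (b p.2) * δ ^ p.2)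
        - (mulOp K (b p.2) * δ ^ p.2) * (mulOp K (a p.1) * δ ^ p.1) with hF
    have hAB : diffOp δ a n * diffOp δ b m - diffOp δ b m * diffOp δ a n
        = ∑ p ∈ s, F p := by
      rw [diffOp, diffOp, Finset.sum_mul_sum, Finset.sum_mul_sum,
        Finset.sum_comm (s := Finset.range (m+1)) (t := Finset.range (n+1)),
        ← Finset.sum_sub_distrib, hs, Finset.sum_product]
      apply Finset.sum_congr rfl
      intro i _
      rw [← Finset.sum_sub_distrib]
    have hordS : OrdLT δ (∑ p ∈ s, F p) (n + m - 1) := hAB ▸ hord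
    have hmem : ((n, m) : ℕ × ℕ) ∈ s := by
      rw [hs]; simp [Finset.mem_product]
    have hsplit : ∑ p ∈ s, F p = F (n, m) + ∑ p ∈ s.erase (n, m), F p :=
      (Finset.add_sum_erase s F hmem).symm
    have hrest : OrdLT δ (∑ p ∈ s.erase (n, m), F p) (n + m - 1) := by
      apply ordLT_sum
      intro p hp
      have hpne : p ≠ (n, m) := (Finset.mem_erase.mp hp).1
      have hpmem := (Finset.mem_erase.mp hp).2
      rw [hs] at hpmem
      obtain ⟨h1, h2⟩ := Finset.mem_product.mp hpmem
      have h1' : p.1 < n + 1 := Finset.mem_range.mp h1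
      have h2' : p.2 < m + 1 := Finset.mem_range.mp h2
      have hne : p.1 ≠ n ∨ p.2 ≠ m := by
        by_contra hcon
        push_neg at hcon
        exact hpne (Prod.ext hcon.1 hcon.2)
      have hlt : p.1 + p.2 ≤ n + m - 1 := by omega
      exact ordLT_mono δ hlt (brOrd δ hL p.1 p.2 (a p.1) (b p.2))
    obtain ⟨R, hR, hEqBr⟩ := brFull δ hL n m (a n) (b m)
    have hFnm : F (n, m) = mulOp K ((n:K) * a n * δ (b m) - (m:K) * b m * δ (a n))
        * δ ^ (n + m - 1) + R := hEqBr
    have heq1 : mulOp K ((n:K) * a n * δ (b m) - (m:K) * b m * δ (a n)) * δ ^ (n + m - 1)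
        = (∑ p ∈ s, F p) - R - ∑ p ∈ s.erase (n, m), F p := by
      rw [hsplit, hFnm]; abel
    have he1 : (n:K) * a n * δ (b m) - (m:K) * b m * δ (a n) = 0 := by
      apply topCoeff δ hL hx (t := n + m - 1)
      rw [heq1]
      exact ordLT_sub δ (ordLT_sub δ hordS hR) hrest
    have hrel : (n:K) * a n * δ (b m) = (m:K) * b m * δ (a n) := by
      linear_combination he1
    have hna : ((n:K)) * a n ≠ 0 :=
      mul_ne_zero (Nat.cast_ne_zero.mpr (by omega)) han
    constructor
    · -- part 1
      have hdiv : δ (b m ^ n / a n ^ m) = 0 := by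
        have hpa : a n ^ m ≠ 0 := pow_ne_zero _ han
        rw [div_eq_mul_inv, hL, d_inv δ hL hpa, d_pow δ hL, d_pow δ hL]
        cases n with
        | zero => omega
        | succ n' =>
          cases m with
          | zero =>
            have h := hrel
            rw [Nat.cast_zero, zero_mul, zero_mul] at h
            have h0 : δ (b 0) = 0 := by
              rcases mul_eq_zero.mp h with h1 | h1
              · exact absurd h1 (by push_cast at hna ⊢; exact hna)
              · exact h1
            simp [h0]
          | succ m' =>
            rw [Nat.succ_sub_one, Nat.succ_sub_one]
            have hrel' : ((n':K)+1) * a (n'+1) * δ (b (m'+1))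
                = ((m':K)+1) * b (m'+1) * δ (a (n'+1)) := by
              push_cast at hrel; linear_combination hrel
            field_simp
            push_cast
            linear_combination (b (m'+1) ^ n' * a (n'+1) ^ m') * hrel'
      obtain ⟨γ, hγ⟩ := (hconst _).mp hdiv
      refine ⟨γ, ?_⟩
      have hpa : a n ^ m ≠ 0 := pow_ne_zero _ han
      rw [← hγ]
      field_simp
    · -- part 2
      intro hda hdb hord2
      cases m with
      | zero =>
        obtain ⟨γ, hγ⟩ := (hconst (b 0)).mp hdb
        exact ⟨0, γ, by rw [hγ]; simp⟩
      | succ m' =>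
        have hordS2 : OrdLT δ (∑ p ∈ s, F p) (n + (m'+1) - 2) := hAB ▸ hord2
        have hmem2 : ((n-1, m'+1) : ℕ × ℕ) ∈ s.erase (n, m'+1) := by
          rw [Finset.mem_erase]
          constructor
          · intro hcon
            have := congrArg Prod.fst hcon
            simp at this
            omega
          · rw [hs]
            simp only [Finset.mem_product, Finset.mem_range]
            omega
        have hmem3 : ((n, m') : ℕ × ℕ) ∈ (s.erase (n, m'+1)).erase (n-1, m'+1) := by
          rw [Finset.mem_erase, Finset.mem_erase]
          refine ⟨?_, ?_, ?_⟩
          · intro hcon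
            have := congrArg Prod.fst hcon
            simp at this
            omega
          · intro hcon
            have := congrArg Prod.snd hcon
            simp at this
          · rw [hs]
            simp only [Finset.mem_product, Finset.mem_range]
            omega
        set s3 := ((s.erase (n, m'+1)).erase (n-1, m'+1)).erase (n, m') with hs3
        have hsplit2 : ∑ p ∈ s, F p
            = F (n, m'+1) + (F (n-1, m'+1) + (F (n, m') + ∑ p ∈ s3, F p)) := by
          rw [hs3, Finset.add_sum_erase _ F hmem3, Finset.add_sum_erase _ F hmem2,
            Finset.add_sum_erase _ F hmem]
        -- leading bracket vanishes since both top coefficients are constants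
        have hca : δ * mulOp K (a n) = mulOp K (a n) * δ := by
          rw [delta_mulOp δ hL, hda, mulOp_zero, add_zero]
        have hcb : δ * mulOp K (b (m'+1)) = mulOp K (b (m'+1)) * δ := by
          rw [delta_mulOp δ hL, hdb, mulOp_zero, add_zero]
        have hcbp : δ ^ n * mulOp K (b (m'+1)) = mulOp K (b (m'+1)) * δ ^ n :=
          ((Commute.pow_left (hcb : Commute δ (mulOp K (b (m'+1)))) n)).eq
        have hcap : δ ^ (m'+1) * mulOp K (a n) = mulOp K (a n) * δ ^ (m'+1) :=
          ((Commute.pow_left (hca : Commute δ (mulOp K (a n))) (m'+1))).eq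
        have hFnm0 : F (n, m'+1) = 0 := by
          have e1 : mulOp K (a n) * δ^n * (mulOp K (b (m'+1)) * δ^(m'+1))
              = mulOp K (a n * b (m'+1)) * δ^(n + (m'+1)) := by
            calc mulOp K (a n) * δ^n * (mulOp K (b (m'+1)) * δ^(m'+1))
                = mulOp K (a n) * (δ^n * mulOp K (b (m'+1))) * δ^(m'+1) := by noncomm_ring
              _ = mulOp K (a n) * (mulOp K (b (m'+1)) * δ^n) * δ^(m'+1) := by rw [hcbp]
              _ = _ := by
                  rw [mulOp_mul, pow_add δ n (m'+1),
                    ← mul_assoc (mulOp K (a n)) (mulOp K (b (m'+1))) (δ^n), mul_assoc]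
          have e2 : mulOp K (b (m'+1)) * δ^(m'+1) * (mulOp K (a n) * δ^n)
              = mulOp K (b (m'+1) * a n) * δ^((m'+1) + n) := by
            calc mulOp K (b (m'+1)) * δ^(m'+1) * (mulOp K (a n) * δ^n)
                = mulOp K (b (m'+1)) * (δ^(m'+1) * mulOp K (a n)) * δ^n := by noncomm_ring
              _ = mulOp K (b (m'+1)) * (mulOp K (a n) * δ^(m'+1)) * δ^n := by rw [hcap]
              _ = _ := by
                  rw [mulOp_mul, pow_add δ (m'+1) n,
                    ← mul_assoc (mulOp K (b (m'+1))) (mulOp K (a n)) (δ^(m'+1)), mul_assoc]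
          show mulOp K (a n) * δ^n * (mulOp K (b (m'+1)) * δ^(m'+1))
              - mulOp K (b (m'+1)) * δ^(m'+1) * (mulOp K (a n) * δ^n) = 0
          rw [e1, e2, mul_comm (b (m'+1)) (a n), Nat.add_comm (m'+1) n, sub_self]
        obtain ⟨R₁, hR₁, hEq₁⟩ := brFull δ hL (n-1) (m'+1) (a (n-1)) (b (m'+1))
        obtain ⟨R₂, hR₂, hEq₂⟩ := brFull δ hL n m' (a n) (b m')
        have hidx1 : (n-1) + (m'+1) - 1 = n + (m'+1) - 2 := by omega
        have hidx2 : n + m' - 1 = n + (m'+1) - 2 := by omega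
        rw [hidx1] at hEq₁ hR₁
        rw [hidx2] at hEq₂ hR₂
        have hF1 : F (n-1, m'+1)
            = mulOp K (((n-1:ℕ):K) * a (n-1) * δ (b (m'+1))
                - ((m'+1:ℕ):K) * b (m'+1) * δ (a (n-1))) * δ ^ (n + (m'+1) - 2) + R₁ := hEq₁
        have hF2 : F (n, m')
            = mulOp K ((n:K) * a n * δ (b m')
                - ((m':ℕ):K) * b m' * δ (a n)) * δ ^ (n + (m'+1) - 2) + R₂ := hEq₂
        have hrest2 : OrdLT δ (∑ p ∈ s3, F p) (n + (m'+1) - 2) := by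
          apply ordLT_sum
          intro p hp
          rw [hs3, Finset.mem_erase, Finset.mem_erase, Finset.mem_erase] at hp
          obtain ⟨hp1, hp2, hp3, hp4⟩ := hp
          rw [hs] at hp4
          obtain ⟨h1, h2⟩ := Finset.mem_product.mp hp4
          have h1' : p.1 < n + 1 := Finset.mem_range.mp h1
          have h2' : p.2 < m' + 1 + 1 := Finset.mem_range.mp h2
          have hne1 : p.1 ≠ n ∨ p.2 ≠ m' := by
            by_contra hcon; push_neg at hcon; exact hp1 (Prod.ext hcon.1 hcon.2)
          have hne2 : p.1 ≠ n-1 ∨ p.2 ≠ m'+1 := by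
            by_contra hcon; push_neg at hcon; exact hp2 (Prod.ext hcon.1 hcon.2)
          have hne3 : p.1 ≠ n ∨ p.2 ≠ m'+1 := by
            by_contra hcon; push_neg at hcon; exact hp3 (Prod.ext hcon.1 hcon.2)
          have hlt : p.1 + p.2 ≤ n + (m'+1) - 2 := by omega
          exact ordLT_mono δ hlt (brOrd δ hL p.1 p.2 (a p.1) (b p.2))
        set c1 : K := ((n-1:ℕ):K) * a (n-1) * δ (b (m'+1))
            - ((m'+1:ℕ):K) * b (m'+1) * δ (a (n-1)) with hc1
        set c2 : K := (n:K) * a n * δ (b m') - ((m':ℕ):K) * b m' * δ (a n) with hc2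
        have hbig : mulOp K (c1 + c2) * δ ^ (n + (m'+1) - 2)
            = (∑ p ∈ s, F p) - R₁ - R₂ - ∑ p ∈ s3, F p := by
          rw [hsplit2, hFnm0, hF1, hF2, mulOp_add, add_mul]
          abel
        have he2 : c1 + c2 = 0 := by
          apply topCoeff δ hL hx (t := n + (m'+1) - 2)
          rw [hbig]
          exact ordLT_sub δ (ordLT_sub δ (ordLT_sub δ hordS2 hR₁) hR₂) hrest2
        have hrel2 : (n:K) * a n * δ (b m') = ((m'+1:ℕ):K) * b (m'+1) * δ (a (n-1)) := by
          rw [hc1, hc2, hdb, hda] at he2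
          linear_combination he2
        set q : K := ((m'+1:ℕ):K) * b (m'+1) / ((n:K) * a n) with hq'
        have hq_num : δ (((m'+1:ℕ):K) * b (m'+1)) = 0 := by
          rw [d_constMul δ hL (d_natCast δ hL _), hdb, mul_zero]
        have hq_den : δ ((n:K) * a n) = 0 := by
          rw [d_constMul δ hL (d_natCast δ hL _), hda, mul_zero]
        have hqc : δ q = 0 := by
          rw [hq', div_eq_mul_inv, hL, d_inv δ hL hna, hq_den, hq_num]
          ring
        have hdbm' : δ (b m') = q * δ (a (n-1)) := by
          rw [hq', div_mul_eq_mul_div, eq_div_iff hna]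
          linear_combination hrel2
        have hkey : δ (b m' - q * a (n-1)) = 0 := by
          rw [map_sub, d_constMul δ hL hqc, hdbm', sub_self]
        obtain ⟨α, hα⟩ := (hconst q).mp hqc
        obtain ⟨β, hβ⟩ := (hconst _).mp hkey
        refine ⟨α, β, ?_⟩
        rw [Nat.add_sub_cancel, ← hα, ← hβ]
        ring
end

section
/- If 𝒜 is a commutative subalgebra of 𝒟 and M ∈ 𝒟, then there exists p ∈ ℤ ∪ {−∞} such that for every L ∈ 𝒜 with ord(L) > 0 one has ord([M,L]) = p + ord(L). -/
open scoped BigOperators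

/-- `HasOrd δ P d` : the differential operator `P` has order `d ∈ ℤ ∪ {-∞}`;
`d = ⊥` exactly when `P = 0`. -/
def HasOrd {K : Type*} [CommRing K] [Algebra ℂ K] (δ : Module.End ℂ K)
    (P : Module.End ℂ K) (d : WithBot ℤ) : Prop :=
  (P = 0 ∧ d = ⊥) ∨ ∃ k : ℕ, d = (k : ℤ) ∧ ∃ a : ℕ → K, P = diffOp δ a k ∧ a k ≠ 0

namespace DOps

variable {K : Type*} [Field K] [Algebra ℂ K]

@[simp] lemma mulOp_apply (a x : K) : mulOp K a x = a * x := rfl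

lemma mulOp_add (a b : K) : mulOp K (a + b) = mulOp K a + mulOp K b := by
  ext x; simp [add_mul]

lemma mulOp_mul (a b : K) : mulOp K (a * b) = mulOp K a * mulOp K b := by
  ext x; simp [Module.End.mul_apply, mul_assoc]

@[simp] lemma mulOp_one : mulOp K 1 = 1 := by
  ext x; simp

@[simp] lemma mulOp_zero : mulOp K 0 = 0 := by
  ext x; simp

lemma mulOp_neg (a : K) : mulOp K (-a) = -(mulOp K a) := by
  ext x; simp

lemma mulOp_inj {a b : K} (h : mulOp K a = mulOp K b) : a = b := by
  have := congrArg (fun f : Module.End ℂ K => f 1) h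
  simpa using this

lemma mulOp_comm (a b : K) : mulOp K a * mulOp K b = mulOp K b * mulOp K a := by
  rw [← mulOp_mul, ← mulOp_mul, mul_comm]

lemma smul_eq_mulOp (c : ℂ) (P : Module.End ℂ K) :
    c • P = mulOp K (algebraMap ℂ K c) * P := by
  ext x; simp [Module.End.mul_apply, Algebra.smul_def]

variable (δ : Module.End ℂ K)

/-- `δ ∘ (t·) = (t·) ∘ δ + (δt·)`. -/
lemma delta_mulOp (hL : ∀ a b : K, δ (a * b) = a * δ b + δ a * b) (t : K) :
    δ * mulOp K t = mulOp K t * δ + mulOp K (δ t) := by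
  ext x; simp [Module.End.mul_apply, hL t x]

lemma diffOp_succ (a : ℕ → K) (n : ℕ) :
    diffOp δ a (n+1) = diffOp δ a n + mulOp K (a (n+1)) * δ^(n+1) :=
  Finset.sum_range_succ _ _

lemma diffOp_zero_eq (a : ℕ → K) : diffOp δ a 0 = mulOp K (a 0) := by
  simp [diffOp]

lemma diffOp_congr {a b : ℕ → K} {n : ℕ} (h : ∀ i, i ≤ n → a i = b i) :
    diffOp δ a n = diffOp δ b n := by
  unfold diffOp
  refine Finset.sum_congr rfl fun i hi => ?_
  rw [h i (Nat.lt_succ_iff.mp (Finset.mem_range.mp hi))]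

lemma diffOp_add (a b : ℕ → K) (n : ℕ) :
    diffOp δ a n + diffOp δ b n = diffOp δ (fun i => a i + b i) n := by
  unfold diffOp
  rw [← Finset.sum_add_distrib]
  refine Finset.sum_congr rfl fun i _ => ?_
  rw [mulOp_add, add_mul]

lemma diffOp_neg (a : ℕ → K) (n : ℕ) :
    -diffOp δ a n = diffOp δ (fun i => -(a i)) n := by
  unfold diffOp
  rw [← Finset.sum_neg_distrib]
  refine Finset.sum_congr rfl fun i _ => ?_
  rw [mulOp_neg]; exact (neg_mul (mulOp K (a i)) (δ ^ i)).symm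

lemma diffOp_zero_fun (n : ℕ) : diffOp δ (fun _ => (0:K)) n = 0 := by
  unfold diffOp
  simp

lemma mulOp_mul_diffOp (t : K) (a : ℕ → K) (n : ℕ) :
    mulOp K t * diffOp δ a n = diffOp δ (fun i => t * a i) n := by
  unfold diffOp
  rw [Finset.mul_sum]
  refine Finset.sum_congr rfl fun i _ => ?_
  rw [← mul_assoc, ← mulOp_mul]

lemma mulOp_mul_deltaPow (s : K) (i : ℕ) :
    mulOp K s * δ^i = diffOp δ (fun j => if j = i then s else 0) i := by
  unfold diffOp
  rw [Finset.sum_eq_single i]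
  · simp
  · intro b _ hb; simp [hb]
  · intro h; exact absurd (Finset.self_mem_range_succ i) h

/-- Left multiplication by `δ`. -/
lemma delta_mul_diffOp (hL : ∀ a b : K, δ (a * b) = a * δ b + δ a * b)
    (a : ℕ → K) (n : ℕ) :
    δ * diffOp δ a n =
      diffOp δ (fun j => (if j ≤ n then δ (a j) else 0) +
        (if j = 0 then 0 else a (j-1))) (n+1) := by
  have expand : δ * diffOp δ a n =
      (∑ i ∈ Finset.range (n+1), mulOp K (δ (a i)) * δ^i) +
      (∑ i ∈ Finset.range (n+1), mulOp K (a i) * δ^(i+1)) := by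
    unfold diffOp
    rw [Finset.mul_sum, ← Finset.sum_add_distrib]
    refine Finset.sum_congr rfl fun i _ => ?_
    rw [← mul_assoc, delta_mulOp δ hL, add_mul, mul_assoc, pow_succ, ← pow_mul_comm']
    exact add_comm _ _
  rw [expand]
  have : diffOp δ (fun j => (if j ≤ n then δ (a j) else 0) +
        (if j = 0 then 0 else a (j-1))) (n+1)
      = (∑ j ∈ Finset.range (n+2), mulOp K (if j ≤ n then δ (a j) else 0) * δ^j)
      + (∑ j ∈ Finset.range (n+2), mulOp K (if j = 0 then (0:K) else a (j-1)) * δ^j) := by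
    unfold diffOp
    rw [← Finset.sum_add_distrib]
    refine Finset.sum_congr rfl fun i _ => ?_
    rw [mulOp_add, add_mul]
  rw [this]
  congr 1
  · symm
    rw [Finset.sum_range_succ, if_neg (by omega : ¬ (n+1 ≤ n)), mulOp_zero, zero_mul,
      add_zero]
    refine Finset.sum_congr rfl fun i hi => ?_
    rw [if_pos (Nat.lt_succ_iff.mp (Finset.mem_range.mp hi))]
  · symm
    rw [Finset.sum_range_succ']
    have h0 : mulOp K (if 0 = 0 then (0:K) else a (0-1)) * δ^0 = 0 := by simp
    rw [h0, add_zero]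
    refine Finset.sum_congr rfl fun i _ => ?_
    simp


/-- `P` lies in the filtration level `n`. -/
def InD (P : Module.End ℂ K) (n : ℕ) : Prop := ∃ a, P = diffOp δ a n

/-- `P` has a representation at level `n` with top coefficient `t`. -/
def Top (P : Module.End ℂ K) (n : ℕ) (t : K) : Prop :=
  ∃ a, P = diffOp δ a n ∧ a n = t

/-- Representation at level `n+1` with top coefficient `t` and second coefficient `u`. -/
def Top2 (P : Module.End ℂ K) (n : ℕ) (t u : K) : Prop :=
  ∃ a, P = diffOp δ a (n+1) ∧ a (n+1) = t ∧ a n = u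

variable {δ}

lemma Top.inD {P : Module.End ℂ K} {n : ℕ} {t : K} (h : Top δ P n t) : InD δ P n :=
  ⟨h.choose, h.choose_spec.1⟩

lemma InD.top {P : Module.End ℂ K} {n : ℕ} (h : InD δ P n) : ∃ t, Top δ P n t := by
  obtain ⟨a, ha⟩ := h; exact ⟨a n, a, ha, rfl⟩

lemma top_zero (n : ℕ) : Top δ (0 : Module.End ℂ K) n 0 :=
  ⟨fun _ => 0, (diffOp_zero_fun δ n).symm, rfl⟩

lemma top_mulOp (t : K) : Top δ (mulOp K t) 0 t :=
  ⟨fun _ => t, by rw [diffOp_zero_eq], rfl⟩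

lemma top_pad {P : Module.End ℂ K} {n : ℕ} (h : InD δ P n) : Top δ P (n+1) 0 := by
  obtain ⟨a, ha⟩ := h
  refine ⟨fun j => if j = n+1 then 0 else a j, ?_, if_pos rfl⟩
  rw [diffOp_succ, if_pos rfl, mulOp_zero, zero_mul, add_zero, ha]
  exact diffOp_congr δ fun i hi => (if_neg (by omega)).symm

lemma top2_pad {P : Module.End ℂ K} {n : ℕ} {t : K} (h : Top δ P n t) :
    Top2 δ P n 0 t := by
  obtain ⟨a, ha, hat⟩ := h
  refine ⟨fun j => if j = n+1 then 0 else a j, ?_, if_pos rfl, by dsimp only; rw [if_neg (by omega : ¬ n = n+1)]; exact hat⟩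
  rw [diffOp_succ, if_pos rfl, mulOp_zero, zero_mul, add_zero, ha]
  exact diffOp_congr δ fun i hi => (if_neg (by omega)).symm

lemma InD.mono {P : Module.End ℂ K} {n m : ℕ} (h : InD δ P n) (hnm : n ≤ m) :
    InD δ P m := by
  induction m with
  | zero => simpa [Nat.le_zero.mp hnm] using h
  | succ m ih =>
    rcases Nat.lt_succ_iff_lt_or_eq.mp (Nat.lt_succ_of_le hnm) with h' | h'
    · exact (top_pad (ih (by omega))).inD
    · subst h'; exact h

lemma inD_top_zero {P : Module.End ℂ K} {n m : ℕ} (h : InD δ P n) (hnm : n < m) :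
    Top δ P m 0 := by
  obtain ⟨m, rfl⟩ : ∃ k, m = k + 1 := ⟨m - 1, by omega⟩
  exact top_pad (h.mono (by omega))

lemma inD_top2_zero {P : Module.End ℂ K} {n m : ℕ} (h : InD δ P n) (hnm : n < m) :
    Top2 δ P m 0 0 := top2_pad (inD_top_zero h hnm)

lemma Top.add {P Q : Module.End ℂ K} {n : ℕ} {t s : K}
    (hP : Top δ P n t) (hQ : Top δ Q n s) : Top δ (P + Q) n (t + s) := by
  obtain ⟨a, ha, hat⟩ := hP; obtain ⟨b, hb, hbt⟩ := hQ
  exact ⟨fun i => a i + b i, by rw [ha, hb, diffOp_add], by dsimp only; rw [hat, hbt]⟩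

lemma Top.neg {P : Module.End ℂ K} {n : ℕ} {t : K} (hP : Top δ P n t) :
    Top δ (-P) n (-t) := by
  obtain ⟨a, ha, hat⟩ := hP
  exact ⟨fun i => -(a i), by rw [ha, diffOp_neg], by dsimp only; rw [hat]⟩

lemma Top.sub {P Q : Module.End ℂ K} {n : ℕ} {t s : K}
    (hP : Top δ P n t) (hQ : Top δ Q n s) : Top δ (P - Q) n (t - s) := by
  simpa [sub_eq_add_neg] using hP.add hQ.neg

lemma Top2.add {P Q : Module.End ℂ K} {n : ℕ} {t s u v : K}
    (hP : Top2 δ P n t u) (hQ : Top2 δ Q n s v) : Top2 δ (P + Q) n (t + s) (u + v) := by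
  obtain ⟨a, ha, hat, hau⟩ := hP; obtain ⟨b, hb, hbt, hbu⟩ := hQ
  exact ⟨fun i => a i + b i, by rw [ha, hb, diffOp_add], by dsimp only; rw [hat, hbt],
    by dsimp only; rw [hau, hbu]⟩

lemma Top2.neg {P : Module.End ℂ K} {n : ℕ} {t u : K} (hP : Top2 δ P n t u) :
    Top2 δ (-P) n (-t) (-u) := by
  obtain ⟨a, ha, hat, hau⟩ := hP
  exact ⟨fun i => -(a i), by rw [ha, diffOp_neg], by dsimp only; rw [hat], by dsimp only; rw [hau]⟩

lemma Top2.sub {P Q : Module.End ℂ K} {n : ℕ} {t s u v : K}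
    (hP : Top2 δ P n t u) (hQ : Top2 δ Q n s v) :
    Top2 δ (P - Q) n (t - s) (u - v) := by
  simpa [sub_eq_add_neg] using hP.add hQ.neg

lemma Top.mulOp_left {P : Module.End ℂ K} {n : ℕ} {t : K} (c : K)
    (hP : Top δ P n t) : Top δ (mulOp K c * P) n (c * t) := by
  obtain ⟨a, ha, hat⟩ := hP
  exact ⟨fun i => c * a i, by rw [ha, mulOp_mul_diffOp], by dsimp only; rw [hat]⟩

lemma Top2.mulOp_left {P : Module.End ℂ K} {n : ℕ} {t u : K} (c : K)
    (hP : Top2 δ P n t u) : Top2 δ (mulOp K c * P) n (c * t) (c * u) := by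
  obtain ⟨a, ha, hat, hau⟩ := hP
  exact ⟨fun i => c * a i, by rw [ha, mulOp_mul_diffOp], by dsimp only; rw [hat], by dsimp only; rw [hau]⟩

lemma Top.smul {P : Module.End ℂ K} {n : ℕ} {t : K} (c : ℂ)
    (hP : Top δ P n t) : Top δ (c • P) n (algebraMap ℂ K c * t) := by
  rw [smul_eq_mulOp]; exact hP.mulOp_left _

/-- Drop a vanishing top coefficient. -/
lemma top_drop {P : Module.End ℂ K} {n : ℕ} (h : Top δ P (n+1) 0) : InD δ P n := by
  obtain ⟨a, ha, hat⟩ := h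
  exact ⟨a, by rw [ha, diffOp_succ, hat, mulOp_zero, zero_mul, add_zero]⟩

lemma top_drop0 {P : Module.End ℂ K} (h : Top δ P 0 0) : P = 0 := by
  obtain ⟨a, ha, hat⟩ := h
  rw [ha, diffOp_zero_eq, hat, mulOp_zero]

lemma Top2.toTop {P : Module.End ℂ K} {n : ℕ} {u : K} (h : Top2 δ P n 0 u) :
    Top δ P n u := by
  obtain ⟨a, ha, hat, hau⟩ := h
  exact ⟨a, by rw [ha, diffOp_succ, hat, mulOp_zero, zero_mul, add_zero], hau⟩

lemma Top.toTop2 {P : Module.End ℂ K} {n : ℕ} {t : K} (h : Top δ P (n+1) t) :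
    ∃ u, Top2 δ P n t u := by
  obtain ⟨a, ha, hat⟩ := h
  exact ⟨a n, a, ha, hat, rfl⟩

lemma Top.combine {P Q : Module.End ℂ K} {n m : ℕ} {t : K}
    (hP : Top δ P n t) (hQ : InD δ Q m) (hmn : m < n) : Top δ (P + Q) n t := by
  simpa using hP.add (inD_top_zero hQ hmn)

lemma Top2.combineTop {P Q : Module.End ℂ K} {n : ℕ} {t u w : K}
    (hP : Top2 δ P n t u) (hQ : Top δ Q n w) : Top2 δ (P + Q) n t (u + w) := by
  simpa using hP.add (top2_pad hQ)

lemma InD.add {P Q : Module.End ℂ K} {n : ℕ} (hP : InD δ P n) (hQ : InD δ Q n) :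
    InD δ (P + Q) n := by
  obtain ⟨t, hP⟩ := hP.top; obtain ⟨s, hQ⟩ := hQ.top; exact (hP.add hQ).inD


lemma Top.cast {P : Module.End ℂ K} {n n' : ℕ} {t t' : K}
    (h : Top δ P n t) (hn : n = n') (ht : t = t') : Top δ P n' t' := by
  subst hn; subst ht; exact h

lemma Top2.cast {P : Module.End ℂ K} {n n' : ℕ} {t t' u u' : K}
    (h : Top2 δ P n t u) (hn : n = n') (ht : t = t') (hu : u = u') :
    Top2 δ P n' t' u' := by
  subst hn; subst ht; subst hu; exact h

lemma InD.cast {P : Module.End ℂ K} {n n' : ℕ}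
    (h : InD δ P n) (hn : n = n') : InD δ P n' := hn ▸ h

lemma Top2.toTop' {P : Module.End ℂ K} {n : ℕ} {t u : K} (h : Top2 δ P n t u) :
    Top δ P (n+1) t := by
  obtain ⟨a, ha, hat, _⟩ := h; exact ⟨a, ha, hat⟩

section Leibniz

lemma Top.delta_mul (hL : ∀ a b : K, δ (a * b) = a * δ b + δ a * b) {Q : Module.End ℂ K} {m : ℕ} {s : K} (hQ : Top δ Q m s) :
    Top δ (δ * Q) (m+1) s := by
  obtain ⟨a, ha, hat⟩ := hQ
  refine ⟨_, by rw [ha, delta_mul_diffOp δ hL], ?_⟩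
  rw [if_neg (by omega : ¬ m + 1 ≤ m), if_neg (by omega : ¬ m + 1 = 0)]
  simpa using hat

lemma Top2.delta_mul (hL : ∀ a b : K, δ (a * b) = a * δ b + δ a * b) {Q : Module.End ℂ K} {m : ℕ} {s u : K} (hQ : Top2 δ Q m s u) :
    Top2 δ (δ * Q) (m+1) s (δ s + u) := by
  obtain ⟨a, ha, hat, hau⟩ := hQ
  refine ⟨_, by rw [ha, delta_mul_diffOp δ hL], ?_, ?_⟩
  · rw [if_neg (by omega : ¬ m + 1 + 1 ≤ m + 1), if_neg (by omega : ¬ m + 1 + 1 = 0)]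
    simpa using hat
  · rw [if_pos (le_refl (m+1)), if_neg (by omega : ¬ m + 1 = 0)]
    simp only [Nat.add_sub_cancel]
    rw [hat, hau]

lemma Top.deltaPow_mul (hL : ∀ a b : K, δ (a * b) = a * δ b + δ a * b) {Q : Module.End ℂ K} {m : ℕ} {s : K} (hQ : Top δ Q m s)
    (k : ℕ) : Top δ (δ^k * Q) (m+k) s := by
  induction k with
  | zero => simpa using hQ
  | succ k ih =>
    have hpow : (δ:Module.End ℂ K)^(k+1) = δ * δ^k := by
      rw [pow_succ, ← pow_mul_comm']
    have := ih.delta_mul hL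
    rw [← mul_assoc, ← hpow] at this
    exact this

lemma Top2.deltaPow_mul (hL : ∀ a b : K, δ (a * b) = a * δ b + δ a * b) {Q : Module.End ℂ K} {m : ℕ} {s u : K} (hQ : Top2 δ Q m s u)
    (k : ℕ) : Top2 δ (δ^k * Q) (m+k) s ((k:K) * δ s + u) := by
  induction k with
  | zero => simpa using hQ
  | succ k ih =>
    have hpow : (δ:Module.End ℂ K)^(k+1) = δ * δ^k := by
      rw [pow_succ, ← pow_mul_comm']
    have := ih.delta_mul hL
    rw [← mul_assoc, ← hpow] at this
    exact this.cast rfl rfl (by push_cast; ring)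

lemma InD.mul (hL : ∀ a b : K, δ (a * b) = a * δ b + δ a * b) {P Q : Module.End ℂ K} {n m : ℕ} (hP : InD δ P n) (hQ : InD δ Q m) :
    InD δ (P * Q) (n + m) := by
  induction n generalizing P with
  | zero =>
    obtain ⟨a, ha⟩ := hP
    obtain ⟨s, hQ'⟩ := hQ.top
    have : P * Q = mulOp K (a 0) * Q := by rw [ha, diffOp_zero_eq]
    rw [this]
    exact ((hQ'.mulOp_left (a 0)).inD).cast (by omega)
  | succ n ih =>
    obtain ⟨a, ha⟩ := hP
    obtain ⟨s, hQ'⟩ := hQ.top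
    have hsplit : P * Q = diffOp δ a n * Q + mulOp K (a (n+1)) * (δ^(n+1) * Q) := by
      rw [ha, diffOp_succ, add_mul, mul_assoc]
    rw [hsplit]
    have h1 : InD δ (diffOp δ a n * Q) (n + m) := ih ⟨a, rfl⟩
    have h2 : InD δ (mulOp K (a (n+1)) * (δ^(n+1) * Q)) (m + (n+1)) :=
      ((hQ'.deltaPow_mul hL (n+1)).mulOp_left _).inD
    exact (h1.mono (by omega)).add (h2.cast (by omega))

lemma Top.mul (hL : ∀ a b : K, δ (a * b) = a * δ b + δ a * b) {P Q : Module.End ℂ K} {n m : ℕ} {t s : K}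
    (hP : Top δ P n t) (hQ : Top δ Q m s) : Top δ (P * Q) (n + m) (t * s) := by
  obtain ⟨a, ha, hat⟩ := hP
  cases n with
  | zero =>
    have : P * Q = mulOp K t * Q := by rw [ha, diffOp_zero_eq, hat]
    rw [this]
    exact (hQ.mulOp_left t).cast (by omega) rfl
  | succ n =>
    have hsplit : P * Q = mulOp K t * (δ^(n+1) * Q) + diffOp δ a n * Q := by
      rw [ha, diffOp_succ, add_mul, mul_assoc, hat, add_comm]
    rw [hsplit]
    have h1 : Top δ (mulOp K t * (δ^(n+1) * Q)) (m + (n+1)) (t * s) :=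
      (hQ.deltaPow_mul hL (n+1)).mulOp_left t
    have h2 : InD δ (diffOp δ a n * Q) (n + m) :=
      InD.mul hL ⟨a, rfl⟩ hQ.inD
    exact ((h1.cast (by omega) rfl).combine h2 (by omega))

lemma Top2.mul (hL : ∀ a b : K, δ (a * b) = a * δ b + δ a * b) {P Q : Module.End ℂ K} {n m : ℕ} {t s u v : K}
    (hP : Top2 δ P n t u) (hQ : Top2 δ Q m s v) :
    Top2 δ (P * Q) (n + m + 1) (t * s) (t * (((n+1:ℕ):K) * δ s + v) + u * s) := by
  obtain ⟨a, ha, hat, hau⟩ := hP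
  have hsplit : P * Q = mulOp K t * (δ^(n+1) * Q) + diffOp δ a n * Q := by
    rw [ha, diffOp_succ, add_mul, mul_assoc, hat, add_comm]
  rw [hsplit]
  have h1 : Top2 δ (mulOp K t * (δ^(n+1) * Q)) (m + (n+1)) (t * s)
      (t * (((n+1:ℕ):K) * δ s + v)) :=
    (hQ.deltaPow_mul hL (n+1)).mulOp_left t
  have h2 : Top δ (diffOp δ a n * Q) (n + (m+1)) (u * s) := by
    have hPa : Top δ (diffOp δ a n) n u := ⟨a, rfl, hau⟩
    exact hPa.mul hL hQ.toTop'
  exact ((h1.cast (by omega) rfl rfl).combineTop (h2.cast (by omega) rfl)).cast rfl rfl rfl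

lemma top_commutator (hL : ∀ a b : K, δ (a * b) = a * δ b + δ a * b) {P Q : Module.End ℂ K} {n m : ℕ} {t s u v : K}
    (hP : Top2 δ P n t u) (hQ : Top2 δ Q m s v) :
    Top δ (P * Q - Q * P) (n + m + 1)
      (((n+1:ℕ):K) * (t * δ s) - ((m+1:ℕ):K) * (s * δ t)) := by
  have h1 := hP.mul hL hQ
  have h2 := (hQ.mul hL hP).cast (by omega : m + n + 1 = n + m + 1) rfl rfl
  have h3 := h1.sub h2
  have h4 : Top2 δ (P * Q - Q * P) (n + m + 1) 0
      ((t * (((n+1:ℕ):K) * δ s + v) + u * s) - (s * (((m+1:ℕ):K) * δ t + u) + v * t)) :=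
    h3.cast rfl (by ring) rfl
  exact h4.toTop.cast rfl (by ring)

end Leibniz


lemma top_mulOp_deltaPow (s : K) (i : ℕ) : Top δ (mulOp K s * δ^i) i s :=
  ⟨_, mulOp_mul_deltaPow δ s i, by simp⟩

section Indep

lemma sub_comm_helper (X Y Z : Module.End ℂ K) : X + Y - (X + Z) = Y - Z := by abel

lemma comm_eq_mulOp (hL : ∀ a b : K, δ (a * b) = a * δ b + δ a * b) (t : K) :
    δ * mulOp K t - mulOp K t * δ = mulOp K (δ t) := by
  rw [delta_mulOp δ hL]; exact add_sub_cancel_left _ _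

lemma deltaPow_comm_mulOp (hL : ∀ a b : K, δ (a * b) = a * δ b + δ a * b) (t : K) :
    ∀ i, Top δ (δ^(i+1) * mulOp K t - mulOp K t * δ^(i+1)) i (((i+1:ℕ):K) * δ t) := by
  intro i
  induction i with
  | zero =>
    have h0 : δ^(0+1) * mulOp K t - mulOp K t * δ^(0+1) = mulOp K (δ t) := by
      rw [pow_one]; exact comm_eq_mulOp hL t
    rw [h0]
    exact (top_mulOp (δ t)).cast rfl (by push_cast; ring)
  | succ i ih =>
    have hp2 : (δ:Module.End ℂ K)^(i+2) = δ * δ^(i+1) := by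
      rw [pow_succ, ← pow_mul_comm']
    have hsplit : δ^(i+2) * mulOp K t - mulOp K t * δ^(i+2) =
        δ * (δ^(i+1) * mulOp K t - mulOp K t * δ^(i+1)) +
        (δ * mulOp K t - mulOp K t * δ) * δ^(i+1) := by
      rw [hp2, mul_sub, sub_mul]; simp only [mul_assoc]; abel
    rw [hsplit, comm_eq_mulOp hL]
    have h1 := ih.delta_mul hL
    have h2 := top_mulOp_deltaPow (δ := δ) (δ t) (i+1)
    exact (h1.add h2).cast rfl (by push_cast; ring)

lemma comm_mulOp (hL : ∀ a b : K, δ (a * b) = a * δ b + δ a * b) (t : K) :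
    ∀ n (a : ℕ → K),
      Top δ (diffOp δ a (n+1) * mulOp K t - mulOp K t * diffOp δ a (n+1)) n
        (((n+1:ℕ):K) * (a (n+1) * δ t)) := by
  intro n
  induction n with
  | zero =>
    intro a
    have hsplit : diffOp δ a 1 * mulOp K t - mulOp K t * diffOp δ a 1 =
        mulOp K (a 1) * (δ * mulOp K t - mulOp K t * δ) := by
      rw [diffOp_succ, diffOp_zero_eq, pow_one, add_mul, mul_add,
        mulOp_comm (a 0) t]
      have e2 : mulOp K t * (mulOp K (a 1) * δ) = mulOp K (a 1) * (mulOp K t * δ) := by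
        rw [← mul_assoc, mulOp_comm t (a 1), mul_assoc]
      rw [e2, mul_assoc, sub_comm_helper, ← mul_sub]
    rw [hsplit, comm_eq_mulOp hL, ← mulOp_mul]
    exact (top_mulOp _).cast rfl (by push_cast; ring)
  | succ n ih =>
    intro a
    set T := mulOp K t
    have hsplit : diffOp δ a (n+2) * T - T * diffOp δ a (n+2) =
        (diffOp δ a (n+1) * T - T * diffOp δ a (n+1)) +
        mulOp K (a (n+2)) * (δ^(n+2) * T - T * δ^(n+2)) := by
      rw [diffOp_succ δ a (n+1)]
      have e2 : T * (mulOp K (a (n+2)) * δ^(n+2)) =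
          mulOp K (a (n+2)) * (T * δ^(n+2)) := by
        rw [← mul_assoc, mulOp_comm t (a (n+2)), mul_assoc]
      rw [add_mul, mul_add, e2, mul_assoc, mul_sub]
      abel
    rw [hsplit]
    have h1 := ih a
    have h2 := (deltaPow_comm_mulOp hL t (n+1)).mulOp_left (a (n+2))
    rw [add_comm]
    exact (h2.combine h1.inD (by omega)).cast rfl (by push_cast; ring)

lemma indep (hL : ∀ a b : K, δ (a * b) = a * δ b + δ a * b)
    {t₀ : K} (ht₀ : δ t₀ ≠ 0) :
    ∀ n (a : ℕ → K), diffOp δ a n = 0 → a n = 0 := by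
  have _ : CharZero K := charZero_of_injective_algebraMap (algebraMap ℂ K).injective
  intro n
  induction n with
  | zero =>
    intro a h
    rw [diffOp_zero_eq] at h
    have := congrArg (fun f : Module.End ℂ K => f 1) h
    simpa using this
  | succ n ih =>
    intro a h
    have hc := comm_mulOp hL t₀ n a
    rw [h] at hc
    simp only [zero_mul, mul_zero, sub_zero] at hc
    obtain ⟨b, hb, hbt⟩ := hc
    have hb0 : b n = 0 := ih b hb.symm
    rw [hb0] at hbt
    have hcast : ((n+1:ℕ):K) ≠ 0 := Nat.cast_ne_zero.mpr (Nat.succ_ne_zero n)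
    rcases mul_eq_zero.mp hbt.symm with h' | h'
    · exact absurd h' hcast
    · rcases mul_eq_zero.mp h' with h'' | h''
      · exact h''
      · exact absurd h'' ht₀

lemma diffOp_sub (a b : ℕ → K) (n : ℕ) :
    diffOp δ a n - diffOp δ b n = diffOp δ (fun i => a i - b i) n := by
  rw [sub_eq_add_neg, diffOp_neg, diffOp_add]
  exact diffOp_congr δ fun i _ => by rw [sub_eq_add_neg]

lemma top_unique (hL : ∀ a b : K, δ (a * b) = a * δ b + δ a * b)
    {t₀ : K} (ht₀ : δ t₀ ≠ 0) {P : Module.End ℂ K} {n : ℕ} {t s : K}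
    (h1 : Top δ P n t) (h2 : Top δ P n s) : t = s := by
  obtain ⟨a, ha, hat⟩ := h1
  obtain ⟨b, hb, hbt⟩ := h2
  have : diffOp δ (fun i => a i - b i) n = 0 := by
    rw [← diffOp_sub, ← ha, ← hb, sub_self]
  have h0 := indep hL ht₀ n _ this
  simp only [hat, hbt] at h0
  exact sub_eq_zero.mp h0

end Indep


section Ord

lemma hasOrd_of_top {P : Module.End ℂ K} {k : ℕ} {t : K}
    (h : Top δ P k t) (ht : t ≠ 0) : HasOrd δ P ((k:ℤ) : WithBot ℤ) := by
  obtain ⟨a, ha, hat⟩ := h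
  exact Or.inr ⟨k, rfl, a, ha, by rw [hat]; exact ht⟩

lemma hasOrd_zero : HasOrd δ (0 : Module.End ℂ K) ⊥ := Or.inl ⟨rfl, rfl⟩

lemma eq_zero_of_hasOrd_bot {P : Module.End ℂ K} (h : HasOrd δ P ⊥) : P = 0 := by
  rcases h with ⟨h, _⟩ | ⟨k, hk, _⟩
  · exact h
  · exact absurd hk.symm (WithBot.coe_ne_bot)

lemma exists_hasOrd {P : Module.End ℂ K} {n : ℕ} (h : InD δ P n) :
    ∃ d, HasOrd δ P d ∧ d ≤ ((n:ℤ) : WithBot ℤ) := by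
  induction n generalizing P with
  | zero =>
    obtain ⟨a, ha⟩ := h
    by_cases h0 : a 0 = 0
    · refine ⟨⊥, ?_, bot_le⟩
      rw [ha, diffOp_zero_eq, h0, mulOp_zero]
      exact hasOrd_zero
    · exact ⟨_, hasOrd_of_top ⟨a, ha, rfl⟩ h0, le_refl _⟩
  | succ n ih =>
    obtain ⟨a, ha⟩ := h
    by_cases h0 : a (n+1) = 0
    · obtain ⟨d, hd, hle⟩ := ih (top_drop ⟨a, ha, h0⟩)
      refine ⟨d, hd, le_trans hle ?_⟩
      exact_mod_cast WithBot.coe_le_coe.mpr (by exact_mod_cast Nat.le_succ n)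
    · exact ⟨_, hasOrd_of_top ⟨a, ha, rfl⟩ h0, le_refl _⟩

lemma hasOrd_le (hL : ∀ a b : K, δ (a * b) = a * δ b + δ a * b) {t₀ : K} (ht₀ : δ t₀ ≠ 0) {P : Module.End ℂ K} {d : WithBot ℤ} {n : ℕ}
    (h : HasOrd δ P d) (hP : InD δ P n) : d ≤ ((n:ℤ) : WithBot ℤ) := by
  rcases h with ⟨_, rfl⟩ | ⟨k, rfl, a, ha, hak⟩
  · exact bot_le
  · by_contra hlt
    push_neg at hlt
    have hkn : n < k := by
      have := WithBot.coe_lt_coe.mp hlt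
      exact_mod_cast this
    exact hak (top_unique hL ht₀ ⟨a, ha, rfl⟩ (inD_top_zero hP hkn))

lemma hasOrd_unique (hL : ∀ a b : K, δ (a * b) = a * δ b + δ a * b) {t₀ : K} (ht₀ : δ t₀ ≠ 0) {P : Module.End ℂ K} {d d' : WithBot ℤ}
    (h : HasOrd δ P d) (h' : HasOrd δ P d') : d = d' := by
  rcases h with ⟨rfl, rfl⟩ | ⟨k, rfl, a, ha, hak⟩
  · rcases h' with ⟨_, rfl⟩ | ⟨k, rfl, a, ha, hak⟩
    · rfl
    · exact absurd (top_unique hL ht₀ ⟨a, ha, rfl⟩ (top_zero k)) hak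
  · rcases h' with ⟨rfl, rfl⟩ | ⟨k', rfl, a', ha', hak'⟩
    · exact absurd (top_unique hL ht₀ ⟨a, ha, rfl⟩ (top_zero k)) hak
    · have h1 := hasOrd_le hL ht₀ (Or.inr ⟨k, rfl, a, ha, hak⟩) ⟨a', ha'⟩
      have h2 := hasOrd_le hL ht₀ (Or.inr ⟨k', rfl, a', ha', hak'⟩) ⟨a, ha⟩
      exact le_antisymm h1 h2

lemma hasOrd_smul {P : Module.End ℂ K} {d : WithBot ℤ} {c : ℂ} (hc : c ≠ 0)
    (h : HasOrd δ P d) : HasOrd δ (c • P) d := by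
  rcases h with ⟨rfl, rfl⟩ | ⟨k, rfl, a, ha, hak⟩
  · rw [smul_zero]; exact hasOrd_zero
  · refine hasOrd_of_top (Top.smul c ⟨a, ha, rfl⟩) ?_
    exact mul_ne_zero (by simpa using (map_ne_zero (algebraMap ℂ K)).mpr hc) hak

lemma hasOrd_mul (hL : ∀ a b : K, δ (a * b) = a * δ b + δ a * b) {P Q : Module.End ℂ K} {d e : WithBot ℤ}
    (h1 : HasOrd δ P d) (h2 : HasOrd δ Q e) : HasOrd δ (P * Q) (d + e) := by
  rcases h1 with ⟨rfl, rfl⟩ | ⟨k, rfl, a, ha, hak⟩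
  · rw [zero_mul, WithBot.bot_add]; exact hasOrd_zero
  rcases h2 with ⟨rfl, rfl⟩ | ⟨l, rfl, b, hb, hbl⟩
  · rw [mul_zero, WithBot.add_bot]; exact hasOrd_zero
  · have := (Top.mul hL ⟨a, ha, rfl⟩ ⟨b, hb, rfl⟩)
    have h := hasOrd_of_top this (mul_ne_zero hak hbl)
    have : (((k + l : ℕ) : ℤ) : WithBot ℤ) = ((k:ℤ) : WithBot ℤ) + ((l:ℤ) : WithBot ℤ) := by
      push_cast; rfl
    rwa [this] at h

lemma hasOrd_sub_lt {X Y : Module.End ℂ K} {dX dY : WithBot ℤ}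
    (hX : HasOrd δ X dX) (hY : HasOrd δ Y dY) (hlt : dX < dY) :
    HasOrd δ (Y - X) dY := by
  rcases hY with ⟨rfl, rfl⟩ | ⟨l, rfl, b, hb, hbl⟩
  · exact absurd hlt (by simp)
  rcases hX with ⟨rfl, _⟩ | ⟨k, rfl, a, ha, hak⟩
  · rw [sub_zero]; exact Or.inr ⟨l, rfl, b, hb, hbl⟩
  · have hkl : k < l := by
      have := WithBot.coe_lt_coe.mp hlt
      exact_mod_cast this
    have hX0 : Top δ X l 0 := inD_top_zero ⟨a, ha⟩ hkl
    have := Top.sub (⟨b, hb, rfl⟩ : Top δ Y l (b l)) hX0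
    rw [sub_zero] at this
    exact hasOrd_of_top this hbl

lemma top_pow (hL : ∀ a b : K, δ (a * b) = a * δ b + δ a * b) {L : Module.End ℂ K} {n : ℕ} {b : K} (h : Top δ L n b) (k : ℕ) :
    Top δ (L^k) (k*n) (b^k) := by
  induction k with
  | zero =>
    have h0 : L^0 = mulOp K 1 := by rw [pow_zero, mulOp_one]
    rw [h0]
    exact (top_mulOp 1).cast (by omega) (pow_zero b).symm
  | succ k ih =>
    have := Top.mul hL ih h
    rw [pow_succ, pow_succ]
    exact this.cast (by ring) rfl

lemma top_sum {k : ℕ} {f : ℕ → Module.End ℂ K} {N : ℕ} {t : K}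
    (h : ∀ i, i < k → Top δ (f i) N t) :
    Top δ (∑ i ∈ Finset.range k, f i) N ((k:K) * t) := by
  induction k with
  | zero =>
    rw [Finset.range_zero, Finset.sum_empty]
    exact (top_zero N).cast rfl (by push_cast; ring)
  | succ k ih =>
    rw [Finset.sum_range_succ]
    have h1 := ih (fun i hi => h i (by omega))
    have h2 := h k (by omega)
    exact (h1.add h2).cast rfl (by push_cast; ring)

lemma comm_pow_expand (M L : Module.End ℂ K) (k : ℕ) :
    M * L^k - L^k * M =
      ∑ i ∈ Finset.range k, L^i * (M*L - L*M) * L^(k-1-i) := by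
  induction k with
  | zero => simp
  | succ k ih =>
    rw [Finset.sum_range_succ]
    have hre : ∑ i ∈ Finset.range k, L^i * (M*L - L*M) * L^(k+1-1-i)
        = (∑ i ∈ Finset.range k, L^i * (M*L - L*M) * L^(k-1-i)) * L := by
      rw [Finset.sum_mul]
      refine Finset.sum_congr rfl fun i hi => ?_
      have hik : i < k := Finset.mem_range.mp hi
      rw [show k+1-1-i = (k-1-i)+1 from by omega, pow_succ, ← mul_assoc]
    rw [hre, ← ih]
    have h1 : k + 1 - 1 - k = 0 := by omega
    rw [h1, pow_zero, mul_one, pow_succ]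
    rw [sub_mul, mul_sub]; simp only [mul_assoc]; abel

lemma hasOrd_comm_pow (hL : ∀ a b : K, δ (a * b) = a * δ b + δ a * b) {M L : Module.End ℂ K} {e : WithBot ℤ} {n : ℕ} {b : K}
    (hC : HasOrd δ (M*L - L*M) e) (hTop : Top δ L n b) (hb : b ≠ 0)
    {k : ℕ} (hk : 1 ≤ k) :
    HasOrd δ (M * L^k - L^k * M) (e + (((k-1 : ℕ) * n : ℤ) : WithBot ℤ)) := by
  have _ : CharZero K := charZero_of_injective_algebraMap (algebraMap ℂ K).injective
  rw [comm_pow_expand]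
  rcases hC with ⟨hC0, rfl⟩ | ⟨d, rfl, c, hc, hcd⟩
  · rw [WithBot.bot_add]
    have : ∀ i ∈ Finset.range k, L^i * (M*L - L*M) * L^(k-1-i) = 0 := by
      intro i _; rw [hC0]; simp
    rw [Finset.sum_congr rfl this, Finset.sum_const, smul_zero]
    exact hasOrd_zero
  · have hCtop : Top δ (M*L - L*M) d (c d) := ⟨c, hc, rfl⟩
    have hsummand : ∀ i, i < k →
        Top δ (L^i * (M*L - L*M) * L^(k-1-i)) (d + (k-1)*n) ((c d) * b^(k-1)) := by
      intro i hi
      have h1 := (top_pow hL hTop i).mul hL hCtop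
      have h2 := h1.mul hL (top_pow hL hTop (k-1-i))
      refine h2.cast (by
        rw [show i*n + d + (k-1-i)*n = d + (i + (k-1-i))*n from by ring,
          show i + (k-1-i) = k-1 from by omega]) ?_
      have hexp : b^i * c d * b^(k-1-i) = c d * (b^i * b^(k-1-i)) := by ring
      rw [hexp, ← pow_add]
      congr 2
      omega
    have hsum := top_sum (h := hsummand)
    have hne : ((k:K) * (c d * b^(k-1))) ≠ 0 :=
      mul_ne_zero (Nat.cast_ne_zero.mpr (by omega)) (mul_ne_zero hcd (pow_ne_zero _ hb))
    have := hasOrd_of_top hsum hne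
    have hcast : (((d + (k-1)*n : ℕ) : ℤ) : WithBot ℤ)
        = ((d:ℤ) : WithBot ℤ) + (((k-1:ℕ) * n : ℤ) : WithBot ℤ) := by
      push_cast
      norm_cast
    rwa [hcast] at this

end Ord


section Main

lemma InD.sub {P Q : Module.End ℂ K} {n : ℕ} (hP : InD δ P n) (hQ : InD δ Q n) :
    InD δ (P - Q) n := by
  obtain ⟨t, hP⟩ := hP.top; obtain ⟨s, hQ⟩ := hQ.top; exact (hP.sub hQ).inD

lemma InD.smul {P : Module.End ℂ K} {n : ℕ} (c : ℂ) (hP : InD δ P n) :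
    InD δ (c • P) n := by
  obtain ⟨t, hP⟩ := hP.top; exact (hP.smul c).inD

lemma hasOrd_neg {P : Module.End ℂ K} {d : WithBot ℤ} (h : HasOrd δ P d) :
    HasOrd δ (-P) d := by
  rcases h with ⟨rfl, rfl⟩ | ⟨k, rfl, a, ha, hak⟩
  · rw [neg_zero]; exact hasOrd_zero
  · exact hasOrd_of_top (Top.neg ⟨a, ha, rfl⟩) (neg_ne_zero.mpr hak)

lemma hasOrd_sub_lt2 {X Y : Module.End ℂ K} {dX dY : WithBot ℤ}
    (hX : HasOrd δ X dX) (hY : HasOrd δ Y dY) (hlt : dX < dY) :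
    HasOrd δ (X - Y) dY := by
  have := hasOrd_neg (hasOrd_sub_lt hX hY hlt)
  rwa [neg_sub] at this

/-- Commuting operators of the same positive order have proportional
top coefficients, with constant ratio. -/
lemma const_ratio (hL : ∀ a b : K, δ (a * b) = a * δ b + δ a * b)
    (hconst : ∀ a : K, δ a = 0 ↔ ∃ c : ℂ, a = algebraMap ℂ K c)
    {t₀ : K} (ht₀ : δ t₀ ≠ 0)
    {A B : Module.End ℂ K} {N : ℕ} {tA tB : K}
    (hN : 1 ≤ N) (hA : Top δ A N tA) (hB : Top δ B N tB)
    (hA0 : tA ≠ 0) (hB0 : tB ≠ 0) (hcomm : A * B = B * A) :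
    ∃ c : ℂ, c ≠ 0 ∧ tA = algebraMap ℂ K c * tB := by
  have _ : CharZero K := charZero_of_injective_algebraMap (algebraMap ℂ K).injective
  obtain ⟨N', rfl⟩ : ∃ N', N = N' + 1 := ⟨N - 1, by omega⟩
  obtain ⟨uA, h2A⟩ := hA.toTop2
  obtain ⟨uB, h2B⟩ := hB.toTop2
  have hC := top_commutator hL h2A h2B
  have hC0 : A * B - B * A = 0 := by rw [hcomm, sub_self]
  rw [hC0] at hC
  have hcoeff := top_unique hL ht₀ hC (top_zero _)
  have hNK : ((N'+1:ℕ):K) ≠ 0 := Nat.cast_ne_zero.mpr (Nat.succ_ne_zero _)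
  have hkey : tA * δ tB = tB * δ tA := by
    have h1 : ((N'+1:ℕ):K) * (tA * δ tB - tB * δ tA) = 0 := by
      rw [mul_sub]; exact hcoeff
    have h2 := (mul_eq_zero.mp h1).resolve_left hNK
    exact sub_eq_zero.mp h2
  -- x := tA / tB is a constant
  set x := tA * tB⁻¹ with hx
  have hxB : tA = x * tB := by rw [hx, mul_assoc, inv_mul_cancel₀ hB0, mul_one]
  have hδx : δ x = 0 := by
    have hdA : δ tA = x * δ tB + δ x * tB := by rw [hxB] at *; exact hL x tB
    have : δ x * (tB * tB) = 0 := by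
      have expand : tB * δ tA = x * (tB * δ tB) + δ x * (tB * tB) := by
        rw [hdA]; ring
      have expand2 : tA * δ tB = x * (tB * δ tB) := by rw [hxB]; ring
      have h5 := hkey
      rw [expand2, expand] at h5
      exact (left_eq_add.mp h5)
    rcases mul_eq_zero.mp this with h | h
    · exact h
    · exact absurd h (mul_ne_zero hB0 hB0)
  obtain ⟨c, hc⟩ := (hconst x).mp hδx
  refine ⟨c, ?_, by rw [← hc]; exact hxB⟩
  rintro rfl
  rw [map_zero] at hc
  exact hA0 (by rw [hxB, hc, zero_mul])

/-- Order bound for a commutator: `ord [M,P] ≤ ord M + ord P - 1`. -/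
lemma comm_ord_le (hL : ∀ a b : K, δ (a * b) = a * δ b + δ a * b)
    {t₀ : K} (ht₀ : δ t₀ ≠ 0)
    {M P : Module.End ℂ K} {m n : ℕ} {tM s : K} {e : WithBot ℤ}
    (hM : Top δ M m tM) (hP : Top δ P n s)
    (hE : HasOrd δ (M * P - P * M) e) : e ≤ ((m:ℤ) + n - 1 : ℤ) := by
  have htop : Top δ (M * P - P * M) (m + n) 0 := by
    have h1 := hM.mul hL hP
    have h2 := (hP.mul hL hM).cast (by omega : n + m = m + n) rfl
    exact (h1.sub h2).cast rfl (by ring)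
  cases hmn : m + n with
  | zero =>
    have h0 : M * P - P * M = 0 := top_drop0 (by rwa [hmn] at htop)
    rw [h0] at hE
    have := hasOrd_unique hL ht₀ hE hasOrd_zero
    subst this
    exact bot_le
  | succ k =>
    have hInD : InD δ (M * P - P * M) k := top_drop (by rwa [hmn] at htop)
    have := hasOrd_le hL ht₀ hE hInD
    refine le_trans this ?_
    have : (k:ℤ) ≤ (m:ℤ) + n - 1 := by omega
    exact_mod_cast WithBot.coe_le_coe.mpr this




lemma step (hL : ∀ a b : K, δ (a * b) = a * δ b + δ a * b)
    (hconst : ∀ a : K, δ a = 0 ↔ ∃ c : ℂ, a = algebraMap ℂ K c)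
    {t₀ : K} (ht₀ : δ t₀ ≠ 0)
    (𝒜 : Subalgebra ℂ (Module.End ℂ K))
    (h𝒜comm : ∀ x ∈ 𝒜, ∀ y ∈ 𝒜, x * y = y * x)
    {M : Module.End ℂ K} {m : ℕ} {tM : K} (hM : Top δ M m tM)
    {L₁ L₂ : Module.End ℂ K} {n₁ n₂ : ℕ} {b₁ b₂ : K} {e₁ : WithBot ℤ} {d₂ : ℕ}
    (hL₁A : L₁ ∈ 𝒜) (hL₂A : L₂ ∈ 𝒜)
    (hn₁ : 1 ≤ n₁) (hn₂ : 1 ≤ n₂)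
    (hb₁ : Top δ L₁ n₁ b₁) (hb₂ : Top δ L₂ n₂ b₂)
    (hb₁0 : b₁ ≠ 0) (hb₂0 : b₂ ≠ 0)
    (he₁ : HasOrd δ (M*L₁ - L₁*M) e₁)
    (hd₂ : HasOrd δ (M*L₂ - L₂*M) ((d₂:ℤ) : WithBot ℤ))
    (hlt : e₁ + (((n₂:ℕ):ℤ) : WithBot ℤ) < (((d₂:ℤ) + ((n₁:ℕ):ℤ) : ℤ) : WithBot ℤ)) :
    ∃ (L₃ : Module.End ℂ K) (n₃ d₃ : ℕ) (b₃ : K),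
      L₃ ∈ 𝒜 ∧ 1 ≤ n₃ ∧ Top δ L₃ n₃ b₃ ∧ b₃ ≠ 0 ∧
      HasOrd δ (M*L₃ - L₃*M) ((d₃:ℤ) : WithBot ℤ) ∧
      (d₂:ℤ) + (n₃:ℤ) < (d₃:ℤ) + (n₂:ℤ) := by
  set s := m + 1 with hs
  set A := L₁ ^ (s * n₂) with hA
  set B := L₂ ^ (s * n₁) with hB
  have hAmem : A ∈ 𝒜 := pow_mem hL₁A _
  have hBmem : B ∈ 𝒜 := pow_mem hL₂A _
  have hn₁0 : 0 < n₁ := hn₁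
  have hn₂0 : 0 < n₂ := hn₂
  have hk₁pos : 0 < s * n₂ := Nat.mul_pos (by omega) hn₂0
  have hk₂pos : 0 < s * n₁ := Nat.mul_pos (by omega) hn₁0
  have hNpos : 0 < s * n₁ * n₂ := Nat.mul_pos hk₂pos hn₂0
  have hTopA : Top δ A (s*n₁*n₂) (b₁ ^ (s*n₂)) :=
    (top_pow hL hb₁ (s*n₂)).cast (by ring) rfl
  have hTopB : Top δ B (s*n₁*n₂) (b₂ ^ (s*n₁)) :=
    (top_pow hL hb₂ (s*n₁)).cast (by ring) rfl
  have hA0 : b₁ ^ (s*n₂) ≠ 0 := pow_ne_zero _ hb₁0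
  have hB0 : b₂ ^ (s*n₁) ≠ 0 := pow_ne_zero _ hb₂0
  obtain ⟨c, hc0, hcratio⟩ := const_ratio hL hconst ht₀ hNpos hTopA hTopB hA0 hB0
    (h𝒜comm A hAmem B hBmem)
  set R := A - c • B with hR
  have hRmem : R ∈ 𝒜 := sub_mem hAmem (Subalgebra.smul_mem 𝒜 hBmem c)
  have hTopR : Top δ R (s*n₁*n₂) 0 :=
    (hTopA.sub (hTopB.smul c)).cast rfl (sub_eq_zero.mpr hcratio)
  -- commutator orders of the powers
  have hCA := hasOrd_comm_pow hL he₁ hb₁ hb₁0 (k := s*n₂) hk₁pos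
  have hCB := hasOrd_comm_pow hL hd₂ hb₂ hb₂0 (k := s*n₁) hk₂pos
  rw [← hA] at hCA
  rw [← hB] at hCB
  -- abbreviations
  set N := s * n₁ * n₂ with hN
  set X₁ := (s * n₂ - 1) * n₁ with hX₁
  set X₂ := (s * n₁ - 1) * n₂ with hX₂
  have hX₁' : (X₁ : ℤ) = (s:ℤ) * n₁ * n₂ - n₁ := by
    rw [hX₁]
    push_cast [Nat.cast_sub (by omega : 1 ≤ s * n₂)]
    ring
  have hX₂' : (X₂ : ℤ) = (s:ℤ) * n₁ * n₂ - n₂ := by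
    rw [hX₂]
    push_cast [Nat.cast_sub (by omega : 1 ≤ s * n₁)]
    ring
  have hX₂m : (m:ℤ) ≤ (X₂:ℤ) := by
    have h1 : s ≤ s * n₁ := Nat.le_mul_of_pos_right s hn₁0
    have h2 : s * n₁ - 1 ≤ X₂ := by
      rw [hX₂]; exact Nat.le_mul_of_pos_right _ hn₂0
    have h3 : m ≤ X₂ := by omega
    exact_mod_cast h3
  have hX₂N : X₂ + n₂ = N := by
    have h1 : X₂ = s * n₁ * n₂ - n₂ := by rw [hX₂, Nat.sub_mul, one_mul]
    have h2 : n₂ ≤ s * n₁ * n₂ := Nat.le_mul_of_pos_left n₂ hk₂pos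
    omega
  -- order of [M, R]
  set eB : ℤ := (d₂:ℤ) + (X₂:ℤ) with heB
  have hCB' : HasOrd δ (M*B - B*M) ((eB : ℤ) : WithBot ℤ) := by
    have he : (((d₂:ℤ) : WithBot ℤ) + ((((s*n₁-1 : ℕ):ℤ) * (n₂:ℤ) : ℤ) : WithBot ℤ))
        = ((eB : ℤ) : WithBot ℤ) := by
      rw [← WithBot.coe_add]
      congr 1
      all_goals simp only [heB, hX₂]
      all_goals push_cast
      all_goals ring
    rwa [he] at hCB
  have hXX₁ : (((s*n₂-1 : ℕ):ℤ) * (n₁:ℤ) : ℤ) = (X₁:ℤ) := by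
    rw [hX₁]; push_cast; ring
  have hltC : e₁ + (((((s*n₂-1 : ℕ):ℤ) * (n₁:ℤ) : ℤ)) : WithBot ℤ)
      < ((eB : ℤ) : WithBot ℤ) := by
    rw [hXX₁]
    cases e₁ with
    | bot =>
      rw [WithBot.bot_add]
      exact WithBot.bot_lt_coe _
    | coe z =>
      have hz : z + (n₂:ℤ) < (d₂:ℤ) + (n₁:ℤ) := by
        have := hlt
        rw [← WithBot.coe_add] at this
        exact_mod_cast this
      rw [← WithBot.coe_add, WithBot.coe_lt_coe, heB, hX₁', hX₂']
      linarith
  have hMR : HasOrd δ (M*R - R*M) ((eB : ℤ) : WithBot ℤ) := by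
    have hsplit : M*R - R*M = (M*A - A*M) - c • (M*B - B*M) := by
      rw [hR, mul_sub, sub_mul, mul_smul_comm, smul_mul_assoc, smul_sub]
      abel
    rw [hsplit]
    exact hasOrd_sub_lt2 hCA (hasOrd_smul hc0 hCB') hltC
  -- R has order < N
  have hRInD : InD δ R (N - 1) := top_drop (hTopR.cast (by omega) rfl)
  obtain ⟨dR, hdR, hdRle⟩ := exists_hasOrd hRInD
  rcases hdR with ⟨hR0, rfl⟩ | ⟨r, rfl, aR, haR, harR⟩
  · -- R = 0 : impossible
    exfalso
    have h0 : M*R - R*M = 0 := by rw [hR0]; simp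
    rw [h0] at hMR
    have := hasOrd_unique hL ht₀ hMR hasOrd_zero
    exact WithBot.coe_ne_bot this
  · have hTopRr : Top δ R r (aR r) := ⟨aR, haR, rfl⟩
    rcases Nat.eq_zero_or_pos r with hr0 | hrpos
    · -- ord R = 0 : impossible since ord [M,R] would be ≤ m-1 < eB
      exfalso
      subst hr0
      have hbound := comm_ord_le hL ht₀ hM hTopRr hMR
      have : (eB:ℤ) ≤ (m:ℤ) + 0 - 1 := by exact_mod_cast hbound
      have : (eB:ℤ) ≤ (m:ℤ) - 1 := by omega
      have hge : (m:ℤ) ≤ eB := by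
        rw [heB]
        have : (0:ℤ) ≤ (d₂:ℤ) := Int.ofNat_nonneg d₂
        linarith [hX₂m]
      omega
    · -- the new element
      have hrN : r ≤ N - 1 := by
        have := hdRle
        rw [WithBot.coe_le_coe] at this
        exact_mod_cast this
      refine ⟨R, r, d₂ + X₂, aR r, hRmem, hrpos, hTopRr, harR, ?_, ?_⟩
      · have : (((d₂ + X₂ : ℕ):ℤ) : WithBot ℤ) = ((eB : ℤ) : WithBot ℤ) := by
          rw [heB]; norm_cast
        rw [this]
        exact hMR
      · push_cast
        omega



lemma no_lt (hL : ∀ a b : K, δ (a * b) = a * δ b + δ a * b)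
    (hconst : ∀ a : K, δ a = 0 ↔ ∃ c : ℂ, a = algebraMap ℂ K c)
    {t₀ : K} (ht₀ : δ t₀ ≠ 0)
    (𝒜 : Subalgebra ℂ (Module.End ℂ K))
    (h𝒜comm : ∀ x ∈ 𝒜, ∀ y ∈ 𝒜, x * y = y * x)
    {M : Module.End ℂ K} {m : ℕ} {tM : K} (hM : Top δ M m tM) :
    ∀ (μ : ℕ) (L₁ L₂ : Module.End ℂ K) (n₁ n₂ : ℕ) (b₁ b₂ : K)
      (e₁ : WithBot ℤ) (d₂ : ℕ),
      L₁ ∈ 𝒜 → L₂ ∈ 𝒜 → 1 ≤ n₁ → 1 ≤ n₂ →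
      Top δ L₁ n₁ b₁ → Top δ L₂ n₂ b₂ → b₁ ≠ 0 → b₂ ≠ 0 →
      HasOrd δ (M*L₁ - L₁*M) e₁ →
      HasOrd δ (M*L₂ - L₂*M) ((d₂:ℤ) : WithBot ℤ) →
      e₁ + (((n₂:ℕ):ℤ) : WithBot ℤ) < (((d₂:ℤ) + ((n₁:ℕ):ℤ) : ℤ) : WithBot ℤ) →
      ((m:ℤ) - 1 - ((d₂:ℤ) - (n₂:ℤ))).toNat ≤ μ → False := by
  intro μ
  induction μ with
  | zero =>
    intro L₁ L₂ n₁ n₂ b₁ b₂ e₁ d₂ h1A h2A hn₁ hn₂ hb₁ hb₂ hb₁0 hb₂0 he₁ hd₂ hlt hμ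
    obtain ⟨L₃, n₃, d₃, b₃, h3A, hn₃, hb₃, hb₃0, hd₃, hql⟩ :=
      step hL hconst ht₀ 𝒜 h𝒜comm hM h1A h2A hn₁ hn₂ hb₁ hb₂ hb₁0 hb₂0 he₁ hd₂ hlt
    have hbound := comm_ord_le hL ht₀ hM hb₃ hd₃
    have hbound' : (d₃:ℤ) ≤ (m:ℤ) + (n₃:ℤ) - 1 := by exact_mod_cast hbound
    omega
  | succ μ ih =>
    intro L₁ L₂ n₁ n₂ b₁ b₂ e₁ d₂ h1A h2A hn₁ hn₂ hb₁ hb₂ hb₁0 hb₂0 he₁ hd₂ hlt hμ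
    obtain ⟨L₃, n₃, d₃, b₃, h3A, hn₃, hb₃, hb₃0, hd₃, hql⟩ :=
      step hL hconst ht₀ 𝒜 h𝒜comm hM h1A h2A hn₁ hn₂ hb₁ hb₂ hb₁0 hb₂0 he₁ hd₂ hlt
    have hbound := comm_ord_le hL ht₀ hM hb₃ hd₃
    have hbound' : (d₃:ℤ) ≤ (m:ℤ) + (n₃:ℤ) - 1 := by exact_mod_cast hbound
    refine ih L₂ L₃ n₂ n₃ b₂ b₃ ((d₂:ℤ) : WithBot ℤ) d₃ h2A h3A hn₂ hn₃ hb₂ hb₃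
      hb₂0 hb₃0 hd₂ hd₃ ?_ ?_
    · rw [← WithBot.coe_add]
      exact WithBot.coe_lt_coe.mpr hql
    · omega

lemma q_eq (hL : ∀ a b : K, δ (a * b) = a * δ b + δ a * b)
    (hconst : ∀ a : K, δ a = 0 ↔ ∃ c : ℂ, a = algebraMap ℂ K c)
    {t₀ : K} (ht₀ : δ t₀ ≠ 0)
    (𝒜 : Subalgebra ℂ (Module.End ℂ K))
    (h𝒜comm : ∀ x ∈ 𝒜, ∀ y ∈ 𝒜, x * y = y * x)
    {M : Module.End ℂ K} {m : ℕ} {tM : K} (hM : Top δ M m tM)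
    {L₁ L₂ : Module.End ℂ K} {n₁ n₂ : ℕ} {b₁ b₂ : K} {e₁ e₂ : WithBot ℤ}
    (h1A : L₁ ∈ 𝒜) (h2A : L₂ ∈ 𝒜) (hn₁ : 1 ≤ n₁) (hn₂ : 1 ≤ n₂)
    (hb₁ : Top δ L₁ n₁ b₁) (hb₂ : Top δ L₂ n₂ b₂)
    (hb₁0 : b₁ ≠ 0) (hb₂0 : b₂ ≠ 0)
    (he₁ : HasOrd δ (M*L₁ - L₁*M) e₁) (he₂ : HasOrd δ (M*L₂ - L₂*M) e₂) :
    e₁ + (((n₂:ℕ):ℤ) : WithBot ℤ) = e₂ + (((n₁:ℕ):ℤ) : WithBot ℤ) := by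
  rcases lt_trichotomy (e₁ + (((n₂:ℕ):ℤ) : WithBot ℤ)) (e₂ + (((n₁:ℕ):ℤ) : WithBot ℤ))
    with h | h | h
  · exfalso
    rcases he₂ with ⟨hz, rfl⟩ | ⟨d₂, rfl, a₂, ha₂, ha₂0⟩
    · rw [WithBot.bot_add] at h
      exact not_lt_bot h
    · refine no_lt hL hconst ht₀ 𝒜 h𝒜comm hM _ L₁ L₂ n₁ n₂ b₁ b₂ e₁ d₂
        h1A h2A hn₁ hn₂ hb₁ hb₂ hb₁0 hb₂0 he₁ (Or.inr ⟨d₂, rfl, a₂, ha₂, ha₂0⟩) ?_ le_rfl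
      rwa [← WithBot.coe_add] at h
  · exact h
  · exfalso
    rcases he₁ with ⟨hz, rfl⟩ | ⟨d₁, rfl, a₁, ha₁, ha₁0⟩
    · rw [WithBot.bot_add] at h
      exact not_lt_bot h
    · refine no_lt hL hconst ht₀ 𝒜 h𝒜comm hM _ L₂ L₁ n₂ n₁ b₂ b₁ e₂ d₁
        h2A h1A hn₂ hn₁ hb₂ hb₁ hb₂0 hb₁0 he₂ (Or.inr ⟨d₁, rfl, a₁, ha₁, ha₁0⟩) ?_ le_rfl
      rwa [← WithBot.coe_add] at h

end Main

end DOps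

/-- If `𝒜` is a commutative subalgebra of the ring `𝒟 = K[∂]` of
differential operators over a differential field `(K, δ)` with field of constants `ℂ`,
and `M ∈ 𝒟`, then there exists `p ∈ ℤ ∪ {-∞}` such that for every `L ∈ 𝒜` of positive
order, `ord([M,L]) = p + ord(L)`. -/
theorem statement1 {K : Type*} [Field K] [Algebra ℂ K]
    (δ : Module.End ℂ K)
    (hLeibniz : ∀ a b : K, δ (a * b) = a * δ b + δ a * b)
    (hconst : ∀ a : K, δ a = 0 ↔ ∃ c : ℂ, a = algebraMap ℂ K c)
    (𝒜 : Subalgebra ℂ (Module.End ℂ K))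
    (h𝒜D : (𝒜 : Set (Module.End ℂ K)) ⊆ {P | ∃ (a : ℕ → K) (k : ℕ), P = diffOp δ a k})
    (h𝒜comm : ∀ x ∈ 𝒜, ∀ y ∈ 𝒜, x * y = y * x)
    (M : Module.End ℂ K) (hM : ∃ (a : ℕ → K) (k : ℕ), M = diffOp δ a k) :
    ∃ p : WithBot ℤ, ∀ (L : Module.End ℂ K) (dL : WithBot ℤ),
      L ∈ 𝒜 → HasOrd δ L dL → 0 < dL →
      HasOrd δ (M * L - L * M) (p + dL) := by
  classical
  by_cases hdeg : ∀ t : K, δ t = 0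
  · -- degenerate case: δ = 0, all operators are multiplication operators
    refine ⟨⊥, fun L dL hLA hOrd _ => ?_⟩
    have hδ0 : δ = 0 := LinearMap.ext fun t => by rw [hdeg t]; rfl
    have hmul : ∀ (a : ℕ → K) (k : ℕ), diffOp δ a k = mulOp K (a 0) := by
      intro a k
      induction k with
      | zero => exact DOps.diffOp_zero_eq δ a
      | succ k ih =>
        rw [DOps.diffOp_succ, ih, hδ0, zero_pow (Nat.succ_ne_zero k), mul_zero, add_zero]
    obtain ⟨a, k, hLrep⟩ := h𝒜D hLA
    obtain ⟨aM, kM, hMrep⟩ := hM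
    have h0 : M * L - L * M = 0 := by
      rw [hLrep, hMrep, hmul, hmul, DOps.mulOp_comm, sub_self]
    rw [h0, WithBot.bot_add]
    exact DOps.hasOrd_zero
  · push_neg at hdeg
    obtain ⟨t₀, ht₀⟩ := hdeg
    obtain ⟨aM, kM, hMrep⟩ := hM
    obtain ⟨dM, hdM, _⟩ := DOps.exists_hasOrd (⟨aM, hMrep⟩ : DOps.InD δ M kM)
    rcases hdM with ⟨hM0, rfl⟩ | ⟨m, rfl, cM, hcM, hcM0⟩
    · -- M = 0
      refine ⟨⊥, fun L dL hLA hOrd _ => ?_⟩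
      rw [hM0, zero_mul, mul_zero, sub_zero, WithBot.bot_add]
      exact DOps.hasOrd_zero
    · have hMtop : DOps.Top δ M m (cM m) := ⟨cM, hcM, rfl⟩
      have hMInD : DOps.InD δ M m := ⟨cM, hcM⟩
      by_cases hex : ∃ L₀, L₀ ∈ 𝒜 ∧ ∃ (n₀ : ℕ) (b₀ : K),
          1 ≤ n₀ ∧ DOps.Top δ L₀ n₀ b₀ ∧ b₀ ≠ 0
      · obtain ⟨L₀, hL₀A, n₀, b₀, hn₀, hb₀, hb₀0⟩ := hex
        have hInD₀ : DOps.InD δ (M*L₀ - L₀*M) (m + n₀) :=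
          (hMInD.mul hLeibniz hb₀.inD).sub
            ((hb₀.inD.mul hLeibniz hMInD).cast (by omega))
        obtain ⟨e₀, he₀, _⟩ := DOps.exists_hasOrd hInD₀
        refine ⟨e₀ + ((-(n₀:ℤ) : ℤ) : WithBot ℤ), fun L dL hLA hOrd hpos => ?_⟩
        rcases hOrd with ⟨_, rfl⟩ | ⟨n, rfl, b, hb, hb0⟩
        · exact absurd hpos (by simp)
        · have hn1 : 1 ≤ n := by
            have h1 : ((0:ℤ) : WithBot ℤ) < ((n:ℤ) : WithBot ℤ) := hpos
            have h2 : (0:ℤ) < (n:ℤ) := WithBot.coe_lt_coe.mp h1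
            omega
          have hTopL : DOps.Top δ L n (b n) := ⟨b, hb, rfl⟩
          have hInDL : DOps.InD δ (M*L - L*M) (m + n) :=
            (hMInD.mul hLeibniz hTopL.inD).sub
              ((hTopL.inD.mul hLeibniz hMInD).cast (by omega))
          obtain ⟨e, he, _⟩ := DOps.exists_hasOrd hInDL
          have hq := DOps.q_eq hLeibniz hconst ht₀ 𝒜 h𝒜comm hMtop
            hLA hL₀A hn1 hn₀ hTopL hb₀ hb0 hb₀0 he he₀
          -- hq : e + n₀ = e₀ + n
          have hEq : e₀ + ((-(n₀:ℤ) : ℤ) : WithBot ℤ) + (((n:ℤ)) : WithBot ℤ) = e := by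
            cases e₀ with
            | bot =>
              rw [WithBot.bot_add, WithBot.bot_add]
              rcases WithBot.add_eq_bot.mp (by rw [hq, WithBot.bot_add] : e + (((n₀:ℕ):ℤ) : WithBot ℤ) = ⊥) with h | h
              · exact h.symm
              · exact absurd h (WithBot.coe_ne_bot)
            | coe z₀ =>
              cases e with
              | bot =>
                exfalso
                rw [WithBot.bot_add, ← WithBot.coe_add] at hq
                exact WithBot.bot_ne_coe hq
              | coe z =>
                rw [← WithBot.coe_add, ← WithBot.coe_add] at hq ⊢
                rw [WithBot.coe_inj] at hq ⊢
                omega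
          rw [hEq]
          exact he
      · refine ⟨⊥, fun L dL hLA hOrd hpos => ?_⟩
        exfalso
        rcases hOrd with ⟨_, rfl⟩ | ⟨n, rfl, b, hb, hb0⟩
        · exact absurd hpos (by simp)
        · have hn1 : 1 ≤ n := by
            have h1 : ((0:ℤ) : WithBot ℤ) < ((n:ℤ) : WithBot ℤ) := hpos
            have h2 : (0:ℤ) < (n:ℤ) := WithBot.coe_lt_coe.mp h1
            omega
          exact hex ⟨L, hLA, n, b n, hn1, ⟨b, hb, rfl⟩, hb0⟩
end

section
/- Let p be a positive integer and let L be a nonzero operator in A₁(ℂ) whose principal symbol with respect to the δ_{p,2}-filtration (Λ(i,j) = pi + 2j) is σ(L) = (ξ^p + χ²)². Then for every nonzero M in the centralizer 𝒞(L), the order of M is congruent to 0 or to p modulo 2p. -/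
open scoped BigOperators

/-- Multiplication by `x` on `ℂ[x]`. -/
noncomputable def Wx : Module.End ℂ (Polynomial ℂ) := LinearMap.mulLeft ℂ Polynomial.X

/-- The derivation `∂ = d/dx` on `ℂ[x]`. -/
noncomputable def Wd : Module.End ℂ (Polynomial ℂ) := Polynomial.derivative

/-- The element `Σ c_{ij} x^i ∂^j` of the first Weyl algebra `A₁(ℂ)`. -/
noncomputable def toOp (c : (ℕ × ℕ) →₀ ℂ) : Module.End ℂ (Polynomial ℂ) :=
  c.sum fun ij z => z • (Wx ^ ij.1 * Wd ^ ij.2)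

/-- `OrdW P k` : the operator `P ∈ A₁(ℂ)` is nonzero and has order (degree in `∂`) `k`. -/
def OrdW (P : Module.End ℂ (Polynomial ℂ)) (k : ℕ) : Prop :=
  ∃ c : (ℕ × ℕ) →₀ ℂ, P = toOp c ∧ c ≠ 0 ∧ k = c.support.sup (fun ij => ij.2)

/-- The principal symbol `σ(P) ∈ ℂ[χ,ξ]` (with `χ = X 0`, `ξ = X 1`) of the operator
with coefficient family `c`, with respect to the `δ_{p,q}`-filtration. -/
noncomputable def symb (p q : ℕ) (c : (ℕ × ℕ) →₀ ℂ) : MvPolynomial (Fin 2) ℂ :=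
  ∑ ij ∈ c.support.filter
      (fun ij => p * ij.1 + q * ij.2 = c.support.sup fun ij => p * ij.1 + q * ij.2),
    MvPolynomial.monomial (Finsupp.single 0 ij.1 + Finsupp.single 1 ij.2) (c ij)


lemma Wx_pow_apply (i : ℕ) : ∀ f : Polynomial ℂ, (Wx ^ i) f = Polynomial.X ^ i * f := by
  induction i with
  | zero => intro f; simp
  | succ n ih =>
      intro f
      rw [pow_succ, Module.End.mul_apply]
      show (Wx ^ n) (Polynomial.X * f) = _
      rw [ih]; ring

lemma Wd_Wx_comm (m : ℕ) : Wd * Wx ^ (m+1) = Wx ^ (m+1) * Wd + ((m+1 : ℕ) : ℂ) • Wx ^ m := by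
  apply LinearMap.ext; intro f
  simp only [Module.End.mul_apply, LinearMap.add_apply, LinearMap.smul_apply, Wx_pow_apply]
  show Polynomial.derivative _ = Polynomial.X ^ (m+1) * Polynomial.derivative f + _
  rw [Polynomial.derivative_mul, Polynomial.derivative_X_pow, Polynomial.smul_eq_C_mul]
  push_cast
  ring

lemma Wd_Wx_comm' (m : ℕ) : Wd * Wx ^ m = Wx ^ m * Wd + (m : ℂ) • Wx ^ (m-1) := by
  cases m with
  | zero => simp
  | succ n => simpa using Wd_Wx_comm n

lemma Wd_pow_Wx_pow (b u : ℕ) :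
    Wd ^ b * Wx ^ u = ∑ k ∈ Finset.range (b+1),
      ((b.choose k * u.descFactorial k : ℕ) : ℂ) • (Wx ^ (u-k) * Wd ^ (b-k)) := by
  induction b with
  | zero => simp
  | succ b ih =>
      have step : Wd ^ (b+1) * Wx ^ u = Wd * (Wd ^ b * Wx ^ u) := by
        rw [pow_succ', mul_assoc]
      rw [step, ih, Finset.mul_sum]
      have expand : ∀ k ∈ Finset.range (b+1),
          Wd * (((b.choose k * u.descFactorial k : ℕ) : ℂ) • (Wx ^ (u-k) * Wd ^ (b-k)))
          = ((b.choose k * u.descFactorial k : ℕ) : ℂ) • (Wx ^ (u-k) * Wd ^ (b+1-k))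
            + ((b.choose k * u.descFactorial (k+1) : ℕ) : ℂ) • (Wx ^ (u-(k+1)) * Wd ^ (b-k)) := by
        intro k hk
        rw [Finset.mem_range] at hk
        have hkb : k ≤ b := Nat.lt_succ_iff.mp hk
        have h1 : b + 1 - k = (b - k) + 1 := by omega
        have h2 : u - k - 1 = u - (k + 1) := by omega
        rw [mul_smul_comm, ← mul_assoc, Wd_Wx_comm' (u-k), add_mul, smul_add,
          mul_assoc, ← pow_succ', h1, smul_mul_assoc, smul_smul, h2]
        congr 2
        norm_cast
        rw [Nat.descFactorial_succ]
        ring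
      rw [Finset.sum_congr rfl expand, Finset.sum_add_distrib]
      have split : ∀ k ∈ Finset.range (b+2),
          (((b+1).choose k * u.descFactorial k : ℕ) : ℂ) • (Wx ^ (u-k) * Wd ^ (b+1-k))
          = ((b.choose k * u.descFactorial k : ℕ) : ℂ) • (Wx ^ (u-k) * Wd ^ (b+1-k))
            + (((if k = 0 then 0 else b.choose (k-1) * u.descFactorial k) : ℕ) : ℂ) • (Wx ^ (u-k) * Wd ^ (b+1-k)) := by
        intro k _
        rcases k with _ | k
        · simp
        · rw [if_neg (Nat.succ_ne_zero k), Nat.succ_sub_one, Nat.choose_succ_succ']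
          push_cast
          rw [add_mul, add_smul, add_comm]
      rw [Finset.sum_congr rfl split, Finset.sum_add_distrib]
      congr 1
      · symm
        rw [Finset.sum_range_succ]
        have h0 : b.choose (b+1) = 0 := Nat.choose_eq_zero_of_lt (Nat.lt_succ_self b)
        simp [h0]
      · symm
        rw [Finset.sum_range_succ']
        norm_num
        apply Finset.sum_congr rfl
        intro k _
        have h1 : b + 1 - (k+1) = b - k := by omega
        rw [h1]

lemma Wd_pow_X_pow (j n : ℕ) :
    (Wd ^ j) (Polynomial.X ^ n : Polynomial ℂ) = ((n.descFactorial j : ℕ) : ℂ) • Polynomial.X ^ (n - j) := by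
  induction j with
  | zero => simp
  | succ j ih =>
      rw [pow_succ', Module.End.mul_apply, ih, map_smul]
      show (n.descFactorial j : ℂ) • Polynomial.derivative (Polynomial.X ^ (n-j) : Polynomial ℂ) = _
      rw [Polynomial.derivative_X_pow, Nat.descFactorial_succ]
      have h2 : n - j - 1 = n - (j+1) := by omega
      rw [h2, Polynomial.smul_eq_C_mul, Polynomial.smul_eq_C_mul, Nat.cast_mul, map_mul]
      ring

lemma WxWd_apply (i j n : ℕ) :
    (Wx ^ i * Wd ^ j) (Polynomial.X ^ n : Polynomial ℂ)
      = ((n.descFactorial j : ℕ) : ℂ) • Polynomial.X ^ (n - j + i) := by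
  rw [Module.End.mul_apply, Wd_pow_X_pow, map_smul, Wx_pow_apply]
  rw [← pow_add]
  ring_nf

lemma toOp_inj {c : (ℕ × ℕ) →₀ ℂ} (h : toOp c = 0) : c = 0 := by
  by_contra hc
  obtain ⟨ij₀, hij₀⟩ := Finsupp.support_nonempty_iff.mpr hc
  set F := c.support.filter (fun ij => (ij.1 : ℤ) - ij.2 = (ij₀.1 : ℤ) - ij₀.2) with hF
  have hFne : F.Nonempty := ⟨ij₀, Finset.mem_filter.mpr ⟨hij₀, rfl⟩⟩
  obtain ⟨b, hbF, hbmin⟩ := Finset.exists_min_image F (fun ij => ij.2) hFne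
  have hbsupp : b ∈ c.support := (Finset.mem_filter.mp hbF).1
  have hbval : (b.1 : ℤ) - b.2 = (ij₀.1 : ℤ) - ij₀.2 := (Finset.mem_filter.mp hbF).2
  have heval : (toOp c (Polynomial.X ^ b.2)).coeff b.1 = 0 := by rw [h]; simp
  rw [toOp, Finsupp.sum, LinearMap.sum_apply, Polynomial.finset_sum_coeff] at heval
  have hcoeff : ∀ ij : ℕ × ℕ,
      ((c ij • (Wx ^ ij.1 * Wd ^ ij.2)) (Polynomial.X ^ b.2)).coeff b.1
      = c ij * (b.2.descFactorial ij.2 : ℂ) * (if b.1 = b.2 - ij.2 + ij.1 then 1 else 0) := by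
    intro ij
    rw [LinearMap.smul_apply, WxWd_apply, Polynomial.coeff_smul, smul_eq_mul,
      Polynomial.coeff_smul, smul_eq_mul, Polynomial.coeff_X_pow]
    ring
  have heval2 : ∑ ij ∈ c.support,
      c ij * (b.2.descFactorial ij.2 : ℂ) * (if b.1 = b.2 - ij.2 + ij.1 then 1 else 0) = 0 := by
    calc ∑ ij ∈ c.support,
        c ij * (b.2.descFactorial ij.2 : ℂ) * (if b.1 = b.2 - ij.2 + ij.1 then 1 else 0)
        = ∑ ij ∈ c.support, ((c ij • (Wx ^ ij.1 * Wd ^ ij.2)) (Polynomial.X ^ b.2)).coeff b.1 :=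
          Finset.sum_congr rfl (fun ij _ => (hcoeff ij).symm)
      _ = 0 := heval
  rw [Finset.sum_eq_single b] at heval2
  · have h1 : b.1 = b.2 - b.2 + b.1 := by omega
    rw [if_pos h1] at heval2
    have h2 : (b.2.descFactorial b.2 : ℂ) ≠ 0 := by
      rw [Nat.descFactorial_self]
      exact_mod_cast Nat.factorial_ne_zero b.2
    have := Finsupp.mem_support_iff.mp hbsupp
    simp only [mul_one] at heval2
    exact this (by
      rcases mul_eq_zero.mp heval2 with h' | h'
      · exact h'
      · exact absurd h' h2)
  · intro ij hij hne
    by_cases hdf : b.2.descFactorial ij.2 = 0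
    · rw [hdf]; push_cast; ring
    · have hj : ij.2 ≤ b.2 := by
        by_contra hgt
        exact hdf (Nat.descFactorial_eq_zero_iff_lt.mpr (by omega))
      by_cases hcond : b.1 = b.2 - ij.2 + ij.1
      · exfalso
        have hijF : ij ∈ F := by
          apply Finset.mem_filter.mpr
          refine ⟨hij, ?_⟩
          have : (ij.1 : ℤ) - ij.2 = (b.1 : ℤ) - b.2 := by omega
          rw [this, hbval]
        have hle : b.2 ≤ ij.2 := hbmin ij hijF
        have hj2 : ij.2 = b.2 := le_antisymm hj hle
        have hi2 : ij.1 = b.1 := by omega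
        exact hne (Prod.ext hi2 hj2)
      · rw [if_neg hcond]; ring
  · intro habs; exact absurd hbsupp habs

noncomputable def TOp : ((ℕ × ℕ) →₀ ℂ) →ₗ[ℂ] Module.End ℂ (Polynomial ℂ) :=
  Finsupp.lsum ℂ fun ij => LinearMap.toSpanSingleton ℂ _ (Wx ^ ij.1 * Wd ^ ij.2)

lemma toOp_eq_TOp (c : (ℕ × ℕ) →₀ ℂ) : toOp c = TOp c := by
  rw [toOp, TOp, Finsupp.lsum_apply]
  rfl

lemma TOp_single (pt : ℕ × ℕ) (z : ℂ) :
    TOp (Finsupp.single pt z) = z • (Wx ^ pt.1 * Wd ^ pt.2) := by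
  rw [TOp, Finsupp.lsum_single, LinearMap.toSpanSingleton_apply]

noncomputable def wmul (a b : (ℕ × ℕ) →₀ ℂ) : (ℕ × ℕ) →₀ ℂ :=
  ∑ ij ∈ a.support, ∑ uv ∈ b.support, ∑ k ∈ Finset.range (ij.2+1),
    Finsupp.single (ij.1+uv.1-k, ij.2+uv.2-k)
      (a ij * b uv * ((ij.2.choose k * uv.1.descFactorial k : ℕ) : ℂ))

lemma toOp_wmul (a b : (ℕ × ℕ) →₀ ℂ) : toOp (wmul a b) = toOp a * toOp b := by
  rw [toOp_eq_TOp, toOp_eq_TOp a, toOp_eq_TOp b, wmul]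
  rw [map_sum]
  have hA : TOp a = ∑ ij ∈ a.support, a ij • (Wx ^ ij.1 * Wd ^ ij.2) := by
    rw [← toOp_eq_TOp, toOp, Finsupp.sum]
  have hB : TOp b = ∑ uv ∈ b.support, b uv • (Wx ^ uv.1 * Wd ^ uv.2) := by
    rw [← toOp_eq_TOp, toOp, Finsupp.sum]
  rw [hA, hB, Finset.sum_mul_sum]
  apply Finset.sum_congr rfl
  intro ij _
  rw [map_sum]
  apply Finset.sum_congr rfl
  intro uv _
  rw [map_sum]
  have key : (Wx ^ ij.1 * Wd ^ ij.2) * (Wx ^ uv.1 * Wd ^ uv.2)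
      = ∑ k ∈ Finset.range (ij.2+1),
        ((ij.2.choose k * uv.1.descFactorial k : ℕ) : ℂ) • (Wx ^ (ij.1+uv.1-k) * Wd ^ (ij.2+uv.2-k)) := by
    have : (Wx ^ ij.1 * Wd ^ ij.2) * (Wx ^ uv.1 * Wd ^ uv.2)
        = Wx ^ ij.1 * (Wd ^ ij.2 * Wx ^ uv.1) * Wd ^ uv.2 := by
      rw [mul_assoc, ← mul_assoc (Wd ^ ij.2), ← mul_assoc]
    rw [this, Wd_pow_Wx_pow, Finset.mul_sum, Finset.sum_mul]
    apply Finset.sum_congr rfl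
    intro k hk
    rw [Finset.mem_range] at hk
    rw [mul_smul_comm, smul_mul_assoc]
    by_cases hku : k ≤ uv.1
    · have e1 : ij.1 + (uv.1 - k) = ij.1 + uv.1 - k := by omega
      have e2 : (ij.2 - k) + uv.2 = ij.2 + uv.2 - k := by omega
      congr 1
      rw [← mul_assoc, ← pow_add, e1, mul_assoc, ← pow_add, e2]
    · have : uv.1.descFactorial k = 0 := Nat.descFactorial_eq_zero_iff_lt.mpr (by omega)
      simp [this]
  rw [smul_mul_smul_comm, key, Finset.smul_sum]
  apply Finset.sum_congr rfl
  intro k _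
  rw [TOp_single, smul_smul]

/-! ### Exponent bookkeeping -/

noncomputable def eV (i j : ℕ) : Fin 2 →₀ ℕ := Finsupp.single 0 i + Finsupp.single 1 j

lemma eV_apply0 (i j : ℕ) : eV i j 0 = i := by
  simp [eV, Finsupp.single_apply]

lemma eV_apply1 (i j : ℕ) : eV i j 1 = j := by
  simp [eV, Finsupp.single_apply]

lemma eV_inj {i j u v : ℕ} (h : eV i j = eV u v) : i = u ∧ j = v := by
  constructor
  · have := congrArg (fun m => m 0) h; simpa [eV_apply0] using this
  · have := congrArg (fun m => m 1) h; simpa [eV_apply1] using this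

lemma eV_surj (m : Fin 2 →₀ ℕ) : m = eV (m 0) (m 1) := by
  ext a
  fin_cases a
  · simp [eV_apply0]
  · simp [eV_apply1]

lemma eV_add (i j u v : ℕ) : eV i j + eV u v = eV (i+u) (j+v) := by
  ext a; fin_cases a <;> simp [eV_apply0, eV_apply1, Finsupp.add_apply]

lemma eV_sub0 {i : ℕ} (hi : 1 ≤ i) (j : ℕ) : eV i j - Finsupp.single 0 1 = eV (i-1) j := by
  ext a
  rw [Finsupp.tsub_apply]
  fin_cases a
  · simp [eV_apply0, Finsupp.single_apply]
  · simp [eV_apply1, Finsupp.single_apply]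

lemma eV_sub1 (i : ℕ) {j : ℕ} (hj : 1 ≤ j) : eV i j - Finsupp.single 1 1 = eV i (j-1) := by
  ext a
  rw [Finsupp.tsub_apply]
  fin_cases a
  · simp [eV_apply0, Finsupp.single_apply]
  · simp [eV_apply1, Finsupp.single_apply]

/-! ### weighted degree -/

def lam (p : ℕ) (ij : ℕ × ℕ) : ℕ := p * ij.1 + 2 * ij.2

def dg (p : ℕ) (c : (ℕ × ℕ) →₀ ℂ) : ℕ := c.support.sup (lam p)

def leadset (p : ℕ) (c : (ℕ × ℕ) →₀ ℂ) : Finset (ℕ × ℕ) :=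
  c.support.filter (fun ij => lam p ij = dg p c)

lemma lam_le_dg (p : ℕ) {c : (ℕ × ℕ) →₀ ℂ} {ij : ℕ × ℕ} (h : ij ∈ c.support) :
    lam p ij ≤ dg p c := Finset.le_sup h

lemma sum_split (n : ℕ) (t : ℕ → ℂ) (h1 : n = 0 → t 1 = 0) :
    ∑ k ∈ Finset.range (n+1), t k
      = t 0 + t 1 + ∑ k ∈ Finset.range (n+1), (if 2 ≤ k then t k else 0) := by
  have hdec : ∀ k, t k = (if k = 0 then t 0 else 0) + (if k = 1 then t 1 else 0)
      + (if 2 ≤ k then t k else 0) := by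
    intro k
    rcases k with _ | _ | k <;> simp
  rw [Finset.sum_congr rfl (fun k _ => hdec k), Finset.sum_add_distrib, Finset.sum_add_distrib]
  congr 2
  · rw [Finset.sum_ite_eq' (Finset.range (n+1)) 0 (fun _ => t 0)]
    simp
  · rw [Finset.sum_ite_eq' (Finset.range (n+1)) 1 (fun _ => t 1)]
    rcases n with _ | n
    · simp [h1 rfl]
    · simp

lemma wmul_apply (a b : (ℕ × ℕ) →₀ ℂ) (pt : ℕ × ℕ) :
    (wmul a b) pt = ∑ ij ∈ a.support, ∑ uv ∈ b.support, ∑ k ∈ Finset.range (ij.2+1),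
      (if (ij.1+uv.1-k, ij.2+uv.2-k) = pt
        then a ij * b uv * ((ij.2.choose k * uv.1.descFactorial k : ℕ) : ℂ) else 0) := by
  rw [wmul, Finsupp.finset_sum_apply]
  apply Finset.sum_congr rfl
  intro ij _
  rw [Finsupp.finset_sum_apply]
  apply Finset.sum_congr rfl
  intro uv _
  rw [Finsupp.finset_sum_apply]
  apply Finset.sum_congr rfl
  intro k _
  rw [Finsupp.single_apply]

lemma key_rel (p : ℕ) (a b : (ℕ × ℕ) →₀ ℂ) (hcomm : wmul a b = wmul b a) (I J : ℕ) :
    (∑ ij ∈ leadset p a, ∑ uv ∈ leadset p b,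
      (if (ij.1+uv.1-1, ij.2+uv.2-1) = (I, J)
        then a ij * b uv * ((ij.2 : ℂ) * uv.1) else 0))
    = ∑ ij ∈ leadset p a, ∑ uv ∈ leadset p b,
      (if (ij.1+uv.1-1, ij.2+uv.2-1) = (I, J)
        then a ij * b uv * ((ij.1 : ℂ) * uv.2) else 0) := by
  by_cases hlev : dg p a + dg p b = p * I + 2 * J + (p + 2)
  swap
  · -- off-level : both sides vanish termwise
    have hz : ∀ (w z : ℕ × ℕ), w ∈ leadset p a → z ∈ leadset p b →
        ∀ (q r : ℕ), (q = w.2 ∧ r = z.1) ∨ (q = w.1 ∧ r = z.2) →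
        (if (w.1+z.1-1, w.2+z.2-1) = (I, J) then a w * b z * ((q : ℂ) * r) else 0) = 0 := by
      intro w z hw hz q r hqr
      by_cases hcond : (w.1+z.1-1, w.2+z.2-1) = (I, J)
      · rw [if_pos hcond]
        have hwl : lam p w = dg p a := (Finset.mem_filter.mp hw).2
        have hzl : lam p z = dg p b := (Finset.mem_filter.mp hz).2
        by_cases hq : q = 0
        · simp [hq]
        by_cases hr : r = 0
        · simp [hr]
        · exfalso
          have h1 : w.1 + z.1 ≥ 1 ∧ w.2 + z.2 ≥ 1 := by
            rcases hqr with ⟨hq', hr'⟩ | ⟨hq', hr'⟩ <;> omega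
          have hIJ : I = w.1 + z.1 - 1 ∧ J = w.2 + z.2 - 1 := by
            have := Prod.mk.injEq (w.1+z.1-1) (w.2+z.2-1) I J ▸ hcond
            exact ⟨(Prod.ext_iff.mp hcond).1.symm, (Prod.ext_iff.mp hcond).2.symm⟩
          apply hlev
          have hI1 : I + 1 = w.1 + z.1 := by omega
          have hJ1 : J + 1 = w.2 + z.2 := by omega
          have : lam p w + lam p z = p * I + 2 * J + (p + 2) := by
            unfold lam
            have : p * (I+1) + 2 * (J+1) = p * (w.1+z.1) + 2 * (w.2+z.2) := by
              rw [hI1, hJ1]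
            nlinarith [this]
          rw [← hwl, ← hzl, this]
      · rw [if_neg hcond]
    rw [Finset.sum_congr rfl (fun w hw => Finset.sum_congr rfl
      (fun z hzz => hz w z hw hzz w.2 z.1 (Or.inl ⟨rfl, rfl⟩)))]
    rw [Finset.sum_congr rfl (fun w hw => Finset.sum_congr rfl
      (fun z hzz => hz w z hw hzz w.1 z.2 (Or.inr ⟨rfl, rfl⟩)))]
  · -- on-level : use commutation
    -- abbreviations
    set A1 := fun (x : (ℕ×ℕ) →₀ ℂ) (y : (ℕ×ℕ) →₀ ℂ) =>
      ∑ ij ∈ x.support, ∑ uv ∈ y.support,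
        (if (ij.1+uv.1-1, ij.2+uv.2-1) = (I, J)
          then x ij * y uv * ((ij.2 : ℂ) * uv.1) else 0) with hA1def
    have main : A1 a b = A1 b a := by
      have hwa := wmul_apply a b (I, J)
      have hwb := wmul_apply b a (I, J)
      have EQ : (wmul a b) (I,J) = (wmul b a) (I,J) := by rw [hcomm]
      rw [hwa, hwb] at EQ
      -- split each inner sum into k=0, k=1, k≥2 parts
      have splitfun : ∀ (x y : (ℕ×ℕ) →₀ ℂ),
          (∑ ij ∈ x.support, ∑ uv ∈ y.support, ∑ k ∈ Finset.range (ij.2+1),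
            (if (ij.1+uv.1-k, ij.2+uv.2-k) = (I,J)
              then x ij * y uv * ((ij.2.choose k * uv.1.descFactorial k : ℕ) : ℂ) else 0))
          = (∑ ij ∈ x.support, ∑ uv ∈ y.support,
              (if (ij.1+uv.1, ij.2+uv.2) = (I,J) then x ij * y uv else 0))
            + A1 x y
            + ∑ ij ∈ x.support, ∑ uv ∈ y.support, ∑ k ∈ Finset.range (ij.2+1),
              (if 2 ≤ k then (if (ij.1+uv.1-k, ij.2+uv.2-k) = (I,J)
                then x ij * y uv * ((ij.2.choose k * uv.1.descFactorial k : ℕ) : ℂ) else 0) else 0) := by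
        intro x y
        rw [← Finset.sum_add_distrib, ← Finset.sum_add_distrib]
        apply Finset.sum_congr rfl
        intro ij _
        rw [← Finset.sum_add_distrib, ← Finset.sum_add_distrib]
        apply Finset.sum_congr rfl
        intro uv _
        have := sum_split ij.2 (fun k =>
          (if (ij.1+uv.1-k, ij.2+uv.2-k) = (I,J)
            then x ij * y uv * ((ij.2.choose k * uv.1.descFactorial k : ℕ) : ℂ) else 0))
          (by intro h0; simp [h0])
        rw [this]
        congr 2
        · beta_reduce
          norm_num
        · beta_reduce
          by_cases hcond : (ij.1+uv.1-1, ij.2+uv.2-1) = (I,J)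
          · rw [if_pos hcond, if_pos hcond, Nat.choose_one_right, Nat.descFactorial_one]
            push_cast; ring
          · rw [if_neg hcond, if_neg hcond]
      rw [splitfun a b, splitfun b a] at EQ
      -- the k ≥ 2 parts vanish
      have rest_zero : ∀ (x y : (ℕ×ℕ) →₀ ℂ), dg p x + dg p y = p * I + 2 * J + (p+2) →
          (∑ ij ∈ x.support, ∑ uv ∈ y.support, ∑ k ∈ Finset.range (ij.2+1),
            (if 2 ≤ k then (if (ij.1+uv.1-k, ij.2+uv.2-k) = (I,J)
              then x ij * y uv * ((ij.2.choose k * uv.1.descFactorial k : ℕ) : ℂ) else 0) else 0)) = 0 := by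
        intro x y hxy
        apply Finset.sum_eq_zero; intro ij hij
        apply Finset.sum_eq_zero; intro uv huv
        apply Finset.sum_eq_zero; intro k hk
        by_cases h2 : 2 ≤ k
        swap
        · rw [if_neg h2]
        rw [if_pos h2]
        by_cases hcond : (ij.1+uv.1-k, ij.2+uv.2-k) = (I,J)
        swap
        · rw [if_neg hcond]
        rw [if_pos hcond]
        by_cases hch : ij.2.choose k = 0
        · simp [hch]
        by_cases hdf : uv.1.descFactorial k = 0
        · simp [hdf]
        exfalso
        have hkj : k ≤ ij.2 := by
          by_contra hgt; exact hch (Nat.choose_eq_zero_of_lt (by omega))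
        have hku : k ≤ uv.1 := by
          by_contra hgt; exact hdf (Nat.descFactorial_eq_zero_iff_lt.mpr (by omega))
        have hIc : I = ij.1+uv.1-k := ((Prod.ext_iff.mp hcond).1).symm
        have hJc : J = ij.2+uv.2-k := ((Prod.ext_iff.mp hcond).2).symm
        have e1 : ij.1 + uv.1 = I + k := by omega
        have e2 : ij.2 + uv.2 = J + k := by omega
        have hlam : lam p ij + lam p uv = p*I + 2*J + k*(p+2) := by
          unfold lam
          have h3 : p * ij.1 + 2 * ij.2 + (p * uv.1 + 2 * uv.2)
              = p * (ij.1 + uv.1) + 2 * (ij.2 + uv.2) := by ring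
          rw [h3, e1, e2]; ring
        have hle : lam p ij + lam p uv ≤ dg p x + dg p y :=
          Nat.add_le_add (lam_le_dg p hij) (lam_le_dg p huv)
        rw [hlam, hxy] at hle
        have h4 : 2*(p+2) ≤ k*(p+2) := Nat.mul_le_mul_right _ h2
        omega
      rw [rest_zero a b hlev, rest_zero b a (by omega)] at EQ
      -- the k = 0 parts agree
      have zero_sym :
          (∑ ij ∈ a.support, ∑ uv ∈ b.support,
            (if (ij.1+uv.1, ij.2+uv.2) = (I,J) then a ij * b uv else 0))
          = ∑ ij ∈ b.support, ∑ uv ∈ a.support,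
            (if (ij.1+uv.1, ij.2+uv.2) = (I,J) then b ij * a uv else 0) := by
        rw [Finset.sum_comm]
        apply Finset.sum_congr rfl; intro uv _
        apply Finset.sum_congr rfl; intro ij _
        have hc : (ij.1+uv.1, ij.2+uv.2) = (uv.1+ij.1, uv.2+ij.2) := by
          rw [Nat.add_comm, Nat.add_comm ij.2]
        rw [hc]
        by_cases hcond : (uv.1+ij.1, uv.2+ij.2) = (I,J)
        · rw [if_pos hcond, if_pos hcond, mul_comm]
        · rw [if_neg hcond, if_neg hcond]
      rw [zero_sym] at EQ
      -- cancel
      exact add_right_cancel (add_left_cancel (by linear_combination EQ))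
    -- now restrict the supports to the leading sets
    have restrict : ∀ (x y : (ℕ×ℕ) →₀ ℂ), dg p x + dg p y = p * I + 2 * J + (p+2) →
        A1 x y = ∑ ij ∈ leadset p x, ∑ uv ∈ leadset p y,
          (if (ij.1+uv.1-1, ij.2+uv.2-1) = (I, J)
            then x ij * y uv * ((ij.2 : ℂ) * uv.1) else 0) := by
      intro x y hxy
      rw [hA1def]
      beta_reduce
      have term_zero : ∀ ij uv : ℕ × ℕ, ij ∈ x.support → uv ∈ y.support →
          (lam p ij ≠ dg p x ∨ lam p uv ≠ dg p y) →
          (if (ij.1+uv.1-1, ij.2+uv.2-1) = (I, J)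
            then x ij * y uv * ((ij.2 : ℂ) * uv.1) else 0) = 0 := by
        intro ij uv hij huv hne
        by_cases hcond : (ij.1+uv.1-1, ij.2+uv.2-1) = (I,J)
        swap
        · rw [if_neg hcond]
        rw [if_pos hcond]
        by_cases hj : ij.2 = 0
        · simp [hj]
        by_cases hu : uv.1 = 0
        · simp [hu]
        exfalso
        have hIc : I = ij.1+uv.1-1 := ((Prod.ext_iff.mp hcond).1).symm
        have hJc : J = ij.2+uv.2-1 := ((Prod.ext_iff.mp hcond).2).symm
        have e1 : ij.1 + uv.1 = I + 1 := by omega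
        have e2 : ij.2 + uv.2 = J + 1 := by omega
        have hlam : lam p ij + lam p uv = p*I + 2*J + (p+2) := by
          unfold lam
          have h3 : p * ij.1 + 2 * ij.2 + (p * uv.1 + 2 * uv.2)
              = p * (ij.1 + uv.1) + 2 * (ij.2 + uv.2) := by ring
          rw [h3, e1, e2]; ring
        have hlt : lam p ij + lam p uv < dg p x + dg p y := by
          rcases hne with h | h
          · have := lt_of_le_of_ne (lam_le_dg p hij) h
            have := lam_le_dg p huv
            omega
          · have := lt_of_le_of_ne (lam_le_dg p huv) h
            have := lam_le_dg p hij
            omega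
        rw [hlam, hxy] at hlt
        omega
      rw [← Finset.sum_subset (Finset.filter_subset _ x.support)
        (by
          intro ij hij hnotin
          apply Finset.sum_eq_zero; intro uv huv
          apply term_zero ij uv hij huv
          left
          intro habs
          exact hnotin (Finset.mem_filter.mpr ⟨hij, habs⟩))]
      apply Finset.sum_congr rfl
      intro ij hij
      rw [← Finset.sum_subset (Finset.filter_subset _ y.support)
        (by
          intro uv huv hnotin
          apply term_zero ij uv (Finset.mem_filter.mp hij).1 huv
          right
          intro habs
          exact hnotin (Finset.mem_filter.mpr ⟨huv, habs⟩))]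
      rfl
    have hba : dg p b + dg p a = p * I + 2 * J + (p+2) := by omega
    have swap_ba : A1 b a = ∑ ij ∈ leadset p a, ∑ uv ∈ leadset p b,
        (if (ij.1+uv.1-1, ij.2+uv.2-1) = (I, J)
          then a ij * b uv * ((ij.1 : ℂ) * uv.2) else 0) := by
      rw [restrict b a hba, Finset.sum_comm]
      apply Finset.sum_congr rfl; intro ij _
      apply Finset.sum_congr rfl; intro uv _
      have hc : (uv.1+ij.1-1, uv.2+ij.2-1) = (ij.1+uv.1-1, ij.2+uv.2-1) := by
        rw [Nat.add_comm, Nat.add_comm uv.2]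
      rw [hc]
      by_cases hcond : (ij.1+uv.1-1, ij.2+uv.2-1) = (I,J)
      · rw [if_pos hcond, if_pos hcond]; ring
      · rw [if_neg hcond, if_neg hcond]
    rw [← restrict a b hlev, ← swap_ba, main]

lemma symb_repr (p : ℕ) (c : (ℕ × ℕ) →₀ ℂ) :
    symb p 2 c = ∑ ij ∈ leadset p c, MvPolynomial.monomial (eV ij.1 ij.2) (c ij) := rfl

lemma pderiv1_symb (p : ℕ) (c : (ℕ × ℕ) →₀ ℂ) :
    MvPolynomial.pderiv 1 (symb p 2 c)
      = ∑ ij ∈ leadset p c,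
          MvPolynomial.monomial (eV ij.1 ij.2 - Finsupp.single 1 1) (c ij * ij.2) := by
  rw [symb_repr, map_sum]
  apply Finset.sum_congr rfl
  intro ij _
  rw [MvPolynomial.pderiv_monomial, eV_apply1]

lemma pderiv0_symb (p : ℕ) (c : (ℕ × ℕ) →₀ ℂ) :
    MvPolynomial.pderiv 0 (symb p 2 c)
      = ∑ ij ∈ leadset p c,
          MvPolynomial.monomial (eV ij.1 ij.2 - Finsupp.single 0 1) (c ij * ij.1) := by
  rw [symb_repr, map_sum]
  apply Finset.sum_congr rfl
  intro ij _
  rw [MvPolynomial.pderiv_monomial, eV_apply0]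

lemma PB_eq_zero (p : ℕ) (a b : (ℕ × ℕ) →₀ ℂ) (hcomm : wmul a b = wmul b a) :
    MvPolynomial.pderiv 1 (symb p 2 a) * MvPolynomial.pderiv 0 (symb p 2 b)
      = MvPolynomial.pderiv 0 (symb p 2 a) * MvPolynomial.pderiv 1 (symb p 2 b) := by
  rw [pderiv1_symb, pderiv0_symb, pderiv0_symb, pderiv1_symb,
    Finset.sum_mul_sum, Finset.sum_mul_sum]
  apply MvPolynomial.ext
  intro m
  rw [MvPolynomial.coeff_sum, MvPolynomial.coeff_sum]
  have hm := eV_surj m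
  set I := m 0
  set J := m 1
  have trL : ∀ ij uv : ℕ × ℕ,
      MvPolynomial.coeff m
        ((MvPolynomial.monomial (eV ij.1 ij.2 - Finsupp.single 1 1) (a ij * ij.2)) *
          (MvPolynomial.monomial (eV uv.1 uv.2 - Finsupp.single 0 1) (b uv * uv.1)))
      = (if (ij.1+uv.1-1, ij.2+uv.2-1) = (I, J)
          then a ij * b uv * ((ij.2 : ℂ) * uv.1) else 0) := by
    intro ij uv
    rw [MvPolynomial.monomial_mul, MvPolynomial.coeff_monomial]
    by_cases hj : 1 ≤ ij.2
    · by_cases hu : 1 ≤ uv.1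
      · rw [eV_sub1 _ hj, eV_sub0 hu, eV_add]
        have e1 : ij.1 + (uv.1 - 1) = ij.1 + uv.1 - 1 := by omega
        have e2 : ij.2 - 1 + uv.2 = ij.2 + uv.2 - 1 := by omega
        rw [e1, e2]
        by_cases hcond : (ij.1+uv.1-1, ij.2+uv.2-1) = (I, J)
        · have hcond' := hcond
          rw [Prod.mk.injEq] at hcond'
          have hexp : eV (ij.1+uv.1-1) (ij.2+uv.2-1) = m := by
            rw [hm, hcond'.1, hcond'.2]
          rw [if_pos hexp, if_pos hcond]; ring
        · have hexp : eV (ij.1+uv.1-1) (ij.2+uv.2-1) ≠ m := by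
            intro habs
            apply hcond
            rw [hm] at habs
            obtain ⟨h1, h2⟩ := eV_inj habs
            rw [h1, h2]
          rw [if_neg hexp, if_neg hcond]
      · have hu0 : uv.1 = 0 := by omega
        simp [hu0]
    · have hj0 : ij.2 = 0 := by omega
      simp [hj0]
  have trR : ∀ ij uv : ℕ × ℕ,
      MvPolynomial.coeff m
        ((MvPolynomial.monomial (eV ij.1 ij.2 - Finsupp.single 0 1) (a ij * ij.1)) *
          (MvPolynomial.monomial (eV uv.1 uv.2 - Finsupp.single 1 1) (b uv * uv.2)))
      = (if (ij.1+uv.1-1, ij.2+uv.2-1) = (I, J)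
          then a ij * b uv * ((ij.1 : ℂ) * uv.2) else 0) := by
    intro ij uv
    rw [MvPolynomial.monomial_mul, MvPolynomial.coeff_monomial]
    by_cases hi : 1 ≤ ij.1
    · by_cases hv : 1 ≤ uv.2
      · rw [eV_sub0 hi, eV_sub1 _ hv, eV_add]
        have e1 : ij.1 - 1 + uv.1 = ij.1 + uv.1 - 1 := by omega
        have e2 : ij.2 + (uv.2 - 1) = ij.2 + uv.2 - 1 := by omega
        rw [e1, e2]
        by_cases hcond : (ij.1+uv.1-1, ij.2+uv.2-1) = (I, J)
        · have hcond' := hcond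
          rw [Prod.mk.injEq] at hcond'
          have hexp : eV (ij.1+uv.1-1) (ij.2+uv.2-1) = m := by
            rw [hm, hcond'.1, hcond'.2]
          rw [if_pos hexp, if_pos hcond]; ring
        · have hexp : eV (ij.1+uv.1-1) (ij.2+uv.2-1) ≠ m := by
            intro habs
            apply hcond
            rw [hm] at habs
            obtain ⟨h1, h2⟩ := eV_inj habs
            rw [h1, h2]
          rw [if_neg hexp, if_neg hcond]
      · have hv0 : uv.2 = 0 := by omega
        simp [hv0]
    · have hi0 : ij.1 = 0 := by omega
      simp [hi0]
  calc ∑ ij ∈ leadset p a, MvPolynomial.coeff m (∑ uv ∈ leadset p b,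
          (MvPolynomial.monomial (eV ij.1 ij.2 - Finsupp.single 1 1) (a ij * ij.2)) *
            (MvPolynomial.monomial (eV uv.1 uv.2 - Finsupp.single 0 1) (b uv * uv.1)))
      = ∑ ij ∈ leadset p a, ∑ uv ∈ leadset p b,
          (if (ij.1+uv.1-1, ij.2+uv.2-1) = (I, J)
            then a ij * b uv * ((ij.2 : ℂ) * uv.1) else 0) := by
        apply Finset.sum_congr rfl; intro ij _
        rw [MvPolynomial.coeff_sum]
        exact Finset.sum_congr rfl (fun uv _ => trL ij uv)
    _ = ∑ ij ∈ leadset p a, ∑ uv ∈ leadset p b,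
          (if (ij.1+uv.1-1, ij.2+uv.2-1) = (I, J)
            then a ij * b uv * ((ij.1 : ℂ) * uv.2) else 0) := key_rel p a b hcomm I J
    _ = _ := by
        apply Finset.sum_congr rfl; intro ij _
        rw [MvPolynomial.coeff_sum]
        exact (Finset.sum_congr rfl (fun uv _ => trR ij uv)).symm

lemma eV_addX0 (i j : ℕ) : eV i j + Finsupp.single 0 1 = eV (i+1) j := by
  ext a; fin_cases a <;>
    simp [eV, Finsupp.add_apply, Finsupp.single_apply]

lemma eV_addX1 (i j k : ℕ) : eV i j + Finsupp.single 1 k = eV i (j+k) := by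
  ext a; fin_cases a <;>
    simp [eV, Finsupp.add_apply, Finsupp.single_apply]

lemma single_ne_single02 (p : ℕ) : Finsupp.single (1 : Fin 2) p ≠ Finsupp.single 0 2 := by
  intro habs
  have := congrArg (fun f => f (0 : Fin 2)) habs
  simp [Finsupp.single_apply] at this

lemma hpol_ne_zero (p : ℕ) :
    (MvPolynomial.X 1 ^ p + MvPolynomial.X 0 ^ 2 : MvPolynomial (Fin 2) ℂ) ≠ 0 := by
  intro habs
  have hco := congrArg (MvPolynomial.coeff (Finsupp.single 0 2)) habs
  rw [MvPolynomial.coeff_add, MvPolynomial.X_pow_eq_monomial, MvPolynomial.X_pow_eq_monomial,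
    MvPolynomial.coeff_monomial, MvPolynomial.coeff_monomial,
    if_neg (single_ne_single02 p), if_pos rfl] at hco
  simp at hco

lemma pd0_hpol (p : ℕ) :
    MvPolynomial.pderiv 0 (MvPolynomial.X 1 ^ p + MvPolynomial.X 0 ^ 2 : MvPolynomial (Fin 2) ℂ)
      = MvPolynomial.monomial (Finsupp.single 0 1) (2 : ℂ) := by
  rw [MvPolynomial.X_pow_eq_monomial, MvPolynomial.X_pow_eq_monomial, map_add,
    MvPolynomial.pderiv_monomial, MvPolynomial.pderiv_monomial]
  have h1 : (Finsupp.single (1 : Fin 2) p) (0 : Fin 2) = 0 := by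
    simp [Finsupp.single_apply]
  have h2 : (Finsupp.single (0 : Fin 2) 2) (0 : Fin 2) = 2 := by
    simp [Finsupp.single_apply]
  have h3 : Finsupp.single (0 : Fin 2) 2 - Finsupp.single 0 1 = Finsupp.single 0 1 := by
    ext a
    rw [Finsupp.tsub_apply]
    by_cases ha : a = 0
    · subst ha; simp [Finsupp.single_apply]
    · simp [Finsupp.single_apply, Ne.symm ha, ha]
  rw [h1, h2, h3]
  push_cast
  simp

lemma pd1_hpol (p : ℕ) :
    MvPolynomial.pderiv 1 (MvPolynomial.X 1 ^ p + MvPolynomial.X 0 ^ 2 : MvPolynomial (Fin 2) ℂ)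
      = MvPolynomial.monomial (Finsupp.single 1 (p-1)) (p : ℂ) := by
  rw [MvPolynomial.X_pow_eq_monomial, MvPolynomial.X_pow_eq_monomial, map_add,
    MvPolynomial.pderiv_monomial, MvPolynomial.pderiv_monomial]
  have h1 : (Finsupp.single (1 : Fin 2) p) (1 : Fin 2) = p := by
    simp [Finsupp.single_apply]
  have h2 : (Finsupp.single (0 : Fin 2) 2) (1 : Fin 2) = 0 := by
    simp [Finsupp.single_apply]
  have h3 : Finsupp.single (1 : Fin 2) p - Finsupp.single 1 1 = Finsupp.single 1 (p-1) := by
    ext a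
    rw [Finsupp.tsub_apply]
    by_cases ha : a = 1
    · subst ha; simp [Finsupp.single_apply]
    · simp [Finsupp.single_apply, Ne.symm ha, ha]
  rw [h1, h2, h3]
  push_cast
  simp

lemma recurrence (p : ℕ) (hp : 0 < p) (cM c : (ℕ × ℕ) →₀ ℂ)
    (hsym : symb p 2 c
      = (MvPolynomial.X 1 ^ p + MvPolynomial.X 0 ^ 2 : MvPolynomial (Fin 2) ℂ) ^ 2)
    (hcomm : wmul cM c = wmul c cM) :
    ∀ I J : ℕ,
      (if 1 ≤ I then 2*((J:ℂ)+1)*(if (I-1, J+1) ∈ leadset p cM then cM (I-1, J+1) else 0) else 0)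
      = (if p ≤ J+1 then (p:ℂ)*((I:ℂ)+1)*(if (I+1, J+1-p) ∈ leadset p cM then cM (I+1, J+1-p) else 0) else 0) := by
  set h : MvPolynomial (Fin 2) ℂ := MvPolynomial.X 1 ^ p + MvPolynomial.X 0 ^ 2 with hdef
  have hPB := PB_eq_zero p cM c hcomm
  rw [hsym] at hPB
  -- cancel the factor 2h
  have hsq : ∀ i : Fin 2, MvPolynomial.pderiv i (h^2)
      = h * (2 * MvPolynomial.pderiv i h) := by
    intro i
    rw [sq, MvPolynomial.pderiv_mul]
    ring
  rw [hsq 0, hsq 1] at hPB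
  have hcancel : MvPolynomial.pderiv 1 (symb p 2 cM) * MvPolynomial.pderiv 0 h
      = MvPolynomial.pderiv 0 (symb p 2 cM) * MvPolynomial.pderiv 1 h := by
    have h2ne : (2 : MvPolynomial (Fin 2) ℂ) * h ≠ 0 :=
      mul_ne_zero two_ne_zero (hpol_ne_zero p)
    apply mul_left_cancel₀ h2ne
    linear_combination hPB
  rw [pd0_hpol, pd1_hpol, pderiv0_symb, pderiv1_symb, Finset.sum_mul, Finset.sum_mul] at hcancel
  intro I J
  -- take coefficients at eV I J
  have hco := congrArg (MvPolynomial.coeff (eV I J)) hcancel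
  rw [MvPolynomial.coeff_sum, MvPolynomial.coeff_sum] at hco
  -- left side
  have hL : ∑ ij ∈ leadset p cM, MvPolynomial.coeff (eV I J)
      ((MvPolynomial.monomial (eV ij.1 ij.2 - Finsupp.single 1 1) (cM ij * ij.2)) *
        MvPolynomial.monomial (Finsupp.single 0 1) (2:ℂ))
      = (if 1 ≤ I then 2*((J:ℂ)+1)*(if (I-1, J+1) ∈ leadset p cM then cM (I-1, J+1) else 0) else 0) := by
    have hterm : ∀ ij : ℕ × ℕ, MvPolynomial.coeff (eV I J)
        ((MvPolynomial.monomial (eV ij.1 ij.2 - Finsupp.single 1 1) (cM ij * ij.2)) *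
          MvPolynomial.monomial (Finsupp.single 0 1) (2:ℂ))
        = (if ij = (I-1, J+1) ∧ 1 ≤ I then 2*((J:ℂ)+1)*cM ij else 0) := by
      intro ij
      rw [MvPolynomial.monomial_mul, MvPolynomial.coeff_monomial]
      by_cases hj : 1 ≤ ij.2
      · rw [eV_sub1 _ hj, eV_addX0]
        by_cases hcond : eV (ij.1+1) (ij.2-1) = eV I J
        · obtain ⟨h1, h2⟩ := eV_inj hcond
          have hI : 1 ≤ I := by omega
          have hij : ij = (I-1, J+1) := by
            apply Prod.ext <;> simp <;> omega
          rw [if_pos hcond, if_pos ⟨hij, hI⟩]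
          have : (ij.2 : ℂ) = (J : ℂ) + 1 := by
            have : ij.2 = J + 1 := by omega
            rw [this]; push_cast; ring
          rw [this]; ring
        · rw [if_neg hcond, if_neg (by
            rintro ⟨hij, hI⟩
            apply hcond
            rw [hij]
            simp only []
            have e1 : I - 1 + 1 = I := by omega
            have e2 : J + 1 - 1 = J := by omega
            rw [e1, e2])]
      · have hj0 : ij.2 = 0 := by omega
        have hrhs : (if ij = (I-1, J+1) ∧ 1 ≤ I then 2*((J:ℂ)+1)*cM ij else 0) = 0 := by
          rw [if_neg]
          rintro ⟨hij, hI2⟩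
          have h5 := congrArg Prod.snd hij
          simp at h5
          omega
        rw [hrhs, hj0]
        simp
    rw [Finset.sum_congr rfl (fun ij _ => hterm ij)]
    by_cases hI : 1 ≤ I
    · rw [if_pos hI]
      have hsimp : ∀ ij : ℕ × ℕ,
          (if ij = (I-1, J+1) ∧ 1 ≤ I then 2*((J:ℂ)+1)*cM ij else 0)
          = (if ij = (I-1, J+1) then 2*((J:ℂ)+1)*cM ij else 0) := by
        intro ij
        by_cases hc : ij = (I-1, J+1)
        · rw [if_pos (And.intro hc hI), if_pos hc]
        · rw [if_neg (by rintro ⟨h5, _⟩; exact hc h5), if_neg hc]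
      rw [Finset.sum_congr rfl (fun ij _ => hsimp ij),
        Finset.sum_ite_eq' (leadset p cM) ((I-1, J+1)) (fun ij => 2*((J:ℂ)+1)*cM ij)]
      by_cases hmem : (I-1, J+1) ∈ leadset p cM
      · rw [if_pos hmem, if_pos hmem]
      · rw [if_neg hmem, if_neg hmem, mul_zero]
    · rw [if_neg hI]
      apply Finset.sum_eq_zero
      intro ij _
      rw [if_neg (by rintro ⟨_, h5⟩; exact hI h5)]
  -- right side
  have hR : ∑ ij ∈ leadset p cM, MvPolynomial.coeff (eV I J)
      ((MvPolynomial.monomial (eV ij.1 ij.2 - Finsupp.single 0 1) (cM ij * ij.1)) *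
        MvPolynomial.monomial (Finsupp.single 1 (p-1)) (p:ℂ))
      = (if p ≤ J+1 then (p:ℂ)*((I:ℂ)+1)*(if (I+1, J+1-p) ∈ leadset p cM then cM (I+1, J+1-p) else 0) else 0) := by
    have hterm : ∀ ij : ℕ × ℕ, MvPolynomial.coeff (eV I J)
        ((MvPolynomial.monomial (eV ij.1 ij.2 - Finsupp.single 0 1) (cM ij * ij.1)) *
          MvPolynomial.monomial (Finsupp.single 1 (p-1)) (p:ℂ))
        = (if ij = (I+1, J+1-p) ∧ p ≤ J+1 then (p:ℂ)*((I:ℂ)+1)*cM ij else 0) := by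
      intro ij
      rw [MvPolynomial.monomial_mul, MvPolynomial.coeff_monomial]
      by_cases hi : 1 ≤ ij.1
      · rw [eV_sub0 hi, eV_addX1]
        by_cases hcond : eV (ij.1-1) (ij.2+(p-1)) = eV I J
        · obtain ⟨h1, h2⟩ := eV_inj hcond
          have hJ : p ≤ J+1 := by omega
          have hij : ij = (I+1, J+1-p) := by
            apply Prod.ext <;> simp <;> omega
          rw [if_pos hcond, if_pos ⟨hij, hJ⟩]
          have : (ij.1 : ℂ) = (I : ℂ) + 1 := by
            have : ij.1 = I + 1 := by omega
            rw [this]; push_cast; ring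
          rw [this]; ring
        · rw [if_neg hcond, if_neg (by
            rintro ⟨hij, hJ⟩
            apply hcond
            rw [hij]
            simp only []
            have e1 : I + 1 - 1 = I := by omega
            have e2 : J + 1 - p + (p - 1) = J := by omega
            rw [e1, e2])]
      · have hi0 : ij.1 = 0 := by omega
        have hrhs : (if ij = (I+1, J+1-p) ∧ p ≤ J+1 then (p:ℂ)*((I:ℂ)+1)*cM ij else 0) = 0 := by
          rw [if_neg]
          rintro ⟨hij, hJ2⟩
          have h5 := congrArg Prod.fst hij
          simp at h5
          omega
        rw [hrhs, hi0]
        simp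
    rw [Finset.sum_congr rfl (fun ij _ => hterm ij)]
    by_cases hJ : p ≤ J+1
    · rw [if_pos hJ]
      have hsimp : ∀ ij : ℕ × ℕ,
          (if ij = (I+1, J+1-p) ∧ p ≤ J+1 then (p:ℂ)*((I:ℂ)+1)*cM ij else 0)
          = (if ij = (I+1, J+1-p) then (p:ℂ)*((I:ℂ)+1)*cM ij else 0) := by
        intro ij
        by_cases hc : ij = (I+1, J+1-p)
        · rw [if_pos (And.intro hc hJ), if_pos hc]
        · rw [if_neg (by rintro ⟨h5, _⟩; exact hc h5), if_neg hc]
      rw [Finset.sum_congr rfl (fun ij _ => hsimp ij),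
        Finset.sum_ite_eq' (leadset p cM) ((I+1, J+1-p)) (fun ij => (p:ℂ)*((I:ℂ)+1)*cM ij)]
      by_cases hmem : (I+1, J+1-p) ∈ leadset p cM
      · rw [if_pos hmem, if_pos hmem]
      · rw [if_neg hmem, if_neg hmem, mul_zero]
    · rw [if_neg hJ]
      apply Finset.sum_eq_zero
      intro ij _
      rw [if_neg (by rintro ⟨_, h5⟩; exact hJ h5)]
  rw [hL, hR] at hco
  exact hco


/-- Let `p > 0` and let `L ∈ A₁(ℂ)` be nonzero with principal symbol
`σ(L) = (ξ^p + χ²)²` with respect to the `δ_{p,2}`-filtration.  Then every nonzero `M`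
in the centralizer `𝒞(L)` has order congruent to `0` or `p` modulo `2p`. -/
theorem statement14 (p : ℕ) (hp : 0 < p)
    (c : (ℕ × ℕ) →₀ ℂ) (hc : c ≠ 0)
    (L : Module.End ℂ (Polynomial ℂ)) (hL : L = toOp c)
    (hsymb : symb p 2 c =
      (MvPolynomial.X 1 ^ p + MvPolynomial.X 0 ^ 2) ^ 2) :
    ∀ M : Module.End ℂ (Polynomial ℂ), M ≠ 0 →
      (∃ cM : (ℕ × ℕ) →₀ ℂ, M = toOp cM) → M * L = L * M →
      ∀ k, OrdW M k → k % (2 * p) = 0 ∨ k % (2 * p) = p := by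
  intro M hM0 hMex hcommOp k hOrd
  obtain ⟨cM, hMc, hcM0, hk⟩ := hOrd
  have hcomm : wmul cM c = wmul c cM := by
    have h1 : toOp (wmul cM c) = toOp (wmul c cM) := by
      rw [toOp_wmul, toOp_wmul, ← hMc, ← hL]; exact hcommOp
    have h2 : toOp (wmul cM c - wmul c cM) = 0 := by
      rw [toOp_eq_TOp, map_sub, ← toOp_eq_TOp, ← toOp_eq_TOp, h1, sub_self]
    exact sub_eq_zero.mp (toOp_inj h2)
  have hrecB := recurrence p hp cM c hsymb hcomm
  set B : ℕ → ℕ → ℂ := fun i j => if (i, j) ∈ leadset p cM then cM (i, j) else 0 with hB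
  have hline : ∀ i j, B i j ≠ 0 → (i, j) ∈ cM.support ∧ p*i + 2*j = dg p cM := by
    intro i j hb
    rw [hB] at hb
    by_cases hmem : (i,j) ∈ leadset p cM
    · have h1 := (Finset.mem_filter.mp hmem).1
      have h2 := (Finset.mem_filter.mp hmem).2
      exact ⟨h1, h2⟩
    · exact absurd (if_neg hmem) hb
  have hpC : (p : ℂ) ≠ 0 := by exact_mod_cast hp.ne'
  have hRec' : ∀ i j : ℕ, 1 ≤ j →
      2*(j:ℂ)*B i j = (if p ≤ j then (p:ℂ)*((i:ℂ)+2)*B (i+2) (j-p) else 0) := by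
    intro i j hj
    have h := hrecB (i+1) (j-1)
    rw [if_pos (by omega : 1 ≤ i + 1)] at h
    have e1 : i + 1 - 1 = i := by omega
    have e2 : j - 1 + 1 = j := by omega
    rw [e1, e2] at h
    have e3 : ((j:ℂ) - 1) + 1 = j := by ring
    have e4 : ((j-1 : ℕ) : ℂ) = (j:ℂ) - 1 := by
      push_cast [hj]; ring
    rw [e4, e3] at h
    rw [h]
    by_cases hpj : p ≤ j
    · rw [if_pos hpj, if_pos hpj]
      have e5 : ((i+1 : ℕ) : ℂ) + 1 = (i:ℂ) + 2 := by push_cast; ring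
      rw [e5]
    · rw [if_neg hpj, if_neg hpj]
  have hB1 : ∀ j, B 1 j = 0 := by
    intro j
    have h := hrecB 0 (j+p-1)
    rw [if_neg (by omega : ¬ (1 ≤ 0))] at h
    rw [if_pos (by omega : p ≤ (j+p-1)+1)] at h
    have e1 : j + p - 1 + 1 - p = j := by omega
    rw [e1] at h
    have := h.symm
    rw [mul_eq_zero, mul_eq_zero] at this
    rcases this with (h1 | h1) | h1
    · exact absurd h1 hpC
    · norm_num at h1
    · exact h1
  have hmodp : ∀ j, ¬ (p ∣ j) → ∀ i, B i j = 0 := by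
    intro j
    induction j using Nat.strong_induction_on with
    | _ j IH =>
      intro hnd i
      have hj1 : 1 ≤ j := by
        rcases Nat.eq_zero_or_pos j with h0 | h0
        · exact absurd (h0 ▸ dvd_zero p) hnd
        · exact h0
      have h := hRec' i j hj1
      have hjC : (2 : ℂ) * j ≠ 0 := by
        have : (j : ℂ) ≠ 0 := Nat.cast_ne_zero.mpr (by omega)
        exact mul_ne_zero two_ne_zero this
      by_cases hpj : p ≤ j
      · rw [if_pos hpj] at h
        have hsub : B (i+2) (j-p) = 0 := by
          apply IH (j-p) (by omega)
          intro hd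
          apply hnd
          obtain ⟨q, hq⟩ := hd
          exact ⟨q+1, by rw [Nat.mul_succ]; omega⟩
        rw [hsub, mul_zero] at h
        rcases mul_eq_zero.mp h with h1 | h1
        · exact absurd h1 hjC
        · exact h1
      · rw [if_neg hpj] at h
        rcases mul_eq_zero.mp h with h1 | h1
        · exact absurd h1 hjC
        · exact h1
  have hup : ∀ i m, B (i+2) (p*m) ≠ 0 → B i (p*(m+1)) ≠ 0 := by
    intro i m hBm
    have hj1 : 1 ≤ p*(m+1) := Nat.mul_pos hp (Nat.succ_pos m)
    have h := hRec' i (p*(m+1)) hj1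
    rw [if_pos (Nat.le_mul_of_pos_right p (Nat.succ_pos m))] at h
    have e : p*(m+1) - p = p*m := by
      rw [Nat.mul_succ]; omega
    rw [e] at h
    intro habs
    rw [habs, mul_zero] at h
    have := h.symm
    rcases mul_eq_zero.mp this with h1 | h1
    · rcases mul_eq_zero.mp h1 with h2 | h2
      · exact hpC h2
      · have h3 : ((i+2 : ℕ) : ℂ) = (i:ℂ) + 2 := by push_cast; ring
        have h5 : ((i+2 : ℕ) : ℂ) ≠ 0 := Nat.cast_ne_zero.mpr (by omega)
        rw [h3] at h5
        exact h5 h2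
    · exact hBm h1
  have hclimb : ∀ i m, B i (p*m) ≠ 0 → B 0 (p*(m + i/2)) ≠ 0 := by
    intro i
    induction i using Nat.strong_induction_on with
    | _ i IH =>
      intro m hBm
      match i, hBm with
      | 0, hBm => simpa using hBm
      | 1, hBm => exact absurd (hB1 (p*m)) hBm
      | (i+2), hBm =>
          have h1 := hup i m hBm
          have h2 := IH i (by omega) (m+1) h1
          have e : m + 1 + i/2 = m + (i+2)/2 := by omega
          rw [e] at h2
          exact h2
  have hsupne : cM.support.Nonempty := Finsupp.support_nonempty_iff.mpr hcM0
  obtain ⟨ij0, hij0mem, hij0sup⟩ := Finset.exists_mem_eq_sup cM.support hsupne (lam p)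
  have hBij0 : B ij0.1 ij0.2 ≠ 0 := by
    rw [hB]
    beta_reduce
    have hmem : (ij0.1, ij0.2) ∈ leadset p cM := by
      rw [Prod.mk.eta]
      exact Finset.mem_filter.mpr ⟨hij0mem, hij0sup.symm⟩
    rw [if_pos hmem, Prod.mk.eta]
    exact Finsupp.mem_support_iff.mp hij0mem
  have hdvd : p ∣ ij0.2 := by
    by_contra hnd
    exact hBij0 (hmodp ij0.2 hnd ij0.1)
  obtain ⟨m0, hm0⟩ := hdvd
  rw [hm0] at hBij0
  have hB0t := hclimb ij0.1 m0 hBij0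
  set t := m0 + ij0.1/2 with ht
  obtain ⟨h0mem, h0line⟩ := hline 0 (p*t) hB0t
  have hdg : dg p cM = 2*(p*t) := by omega
  have hkval : k = p*t := by
    rw [hk]
    apply le_antisymm
    · apply Finset.sup_le
      intro ij hmem
      have hle := lam_le_dg p hmem
      rw [hdg] at hle
      unfold lam at hle
      omega
    · exact Finset.le_sup (f := fun ij : ℕ × ℕ => ij.2) h0mem
  rcases Nat.even_or_odd t with ⟨s2, hs2⟩ | ⟨s2, hs2⟩
  · left
    rw [hkval, hs2]
    have e : p*(s2+s2) = (2*p)*s2 := by ring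
    rw [e, Nat.mul_mod_right]
  · right
    rw [hkval, hs2]
    have e : p*(2*s2+1) = p + (2*p)*s2 := by ring
    rw [e, Nat.add_mul_mod_self_left]
    exact Nat.mod_eq_of_lt (by omega)
end
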